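/- arXiv:1508.05671 — 8 statements merged into one kernel-verified Lean document; each statement's English description precedes it below -/
import Mathlib

section
/- Let n ≥ 1, let A be a real n×n matrix with det A > 0, and let b ∈ ℝⁿ be such that the pair (A,b) is controllable, i.e. the n×n matrix with columns b, Ab, …, A^{n−1}b is invertible. Let λ₁,…,λₙ ∈ ℂ be the spectrum (with multiplicities) of some real n×n matrix R with det R > 0. Then there exists K ∈ ℝⁿ such that the matrix A·exp(bKᵀ) has the same characteristic polynomial as R (hence spectrum {λ₁,…,λₙ} with multiplicities), where exp is the matrix exponential and bKᵀ denotes the rank-one matrix with entries bᵢKⱼ. -/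
/-!
Since `(b Kᵀ)² = (K ⬝ᵥ b) • b Kᵀ`, the matrix `b Kᵀ` is a multiple of an idempotent (or squares to
zero), so `exp (b Kᵀ)` runs exactly through the matrices `1 + b Mᵀ` with `1 + M ⬝ᵥ b > 0`.
Moreover `A (1 + b Mᵀ) = A + (A b) Mᵀ`, and `(A, A b)` is controllable because `A` is invertible.

By the matrix determinant lemma, `charpoly (A + u Mᵀ) = χ_A - Mᵀ adj(X - A) u`, which is affine
in `M`. The coefficient vectors of `adj(X - A) u` span an `A`-invariant subspace containing `u`,
hence everything when `(A, u)` is controllable; so the linear part is injective and therefore onto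
the polynomials of degree `< n`, and every monic polynomial of degree `n` is attained. Taking
`χ_R`, comparing constant coefficients gives `det A * (1 + M ⬝ᵥ b) = det R > 0`, so the gain
matrix `1 + b Mᵀ` is an exponential.
-/

open Matrix Polynomial

section Exp
variable {𝔸 : Type*} [Ring 𝔸] [Algebra ℝ 𝔸] [TopologicalSpace 𝔸] [IsTopologicalRing 𝔸]

theorem IsIdempotentElem.exp_smul [T2Space 𝔸] [ContinuousSMul ℝ 𝔸] {P : 𝔸}
    (hP : IsIdempotentElem P) (t : ℝ) : NormedSpace.exp (t • P) = 1 + (Real.exp t - 1) • P := by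
  have hsum : HasSum (fun k : ℕ => (t ^ k / k.factorial) • P + if k = 0 then 1 - P else 0)
      (Real.exp t • P + (1 - P)) := by
    refine HasSum.add (HasSum.smul_const ?_ P) (hasSum_ite_eq 0 (1 - P))
    rw [Real.exp_eq_exp_ℝ]
    exact NormedSpace.expSeries_div_hasSum_exp t
  rw [NormedSpace.exp_eq_tsum ℝ]
  convert hsum.tsum_eq using 1
  · refine tsum_congr fun k => ?_
    rcases k with _ | k
    · simp
    · rw [_root_.smul_pow, hP.pow_succ_eq, smul_smul, div_eq_inv_mul]
      simp
  · rw [sub_smul, one_smul]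
    abel

theorem NormedSpace.exp_eq_one_add_of_mul_self_eq_zero {N : 𝔸} (hN : N * N = 0) :
    NormedSpace.exp N = 1 + N := by
  rw [NormedSpace.exp_eq_tsum ℝ]
  dsimp only
  rw [tsum_eq_sum (s := Finset.range 2)]
  · simp [Finset.sum_range_succ]
  · intro k hk
    obtain ⟨k, rfl⟩ : ∃ j, k = j + 2 := ⟨k - 2, by simp at hk; omega⟩
    rw [pow_add, sq, hN, mul_zero, smul_zero]

end Exp

namespace Matrix
variable {ι : Type*} [Fintype ι] [DecidableEq ι]

theorem det_one_add_vecMulVec {R : Type*} [CommRing R] (u v : ι → R) :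
    (1 + vecMulVec u v).det = 1 + v ⬝ᵥ u := by
  rw [vecMulVec_eq Unit, det_one_add_replicateCol_mul_replicateRow]

theorem det_add_vecMulVec_of_isUnit_det {R : Type*} [CommRing R] {P : Matrix ι ι R}
    (hP : IsUnit P.det) (u v : ι → R) :
    (P + vecMulVec u v).det = P.det + v ⬝ᵥ (P.adjugate *ᵥ u) := by
  calc (P + vecMulVec u v).det = (P * (1 + vecMulVec (P⁻¹ *ᵥ u) v)).det := by
        rw [Matrix.mul_add, Matrix.mul_one, mul_vecMulVec, mulVec_mulVec, mul_nonsing_inv _ hP,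
          one_mulVec]
    _ = P.det * (1 + v ⬝ᵥ (P⁻¹ *ᵥ u)) := by rw [det_mul, det_one_add_vecMulVec]
    _ = P.det + v ⬝ᵥ (P.adjugate *ᵥ u) := by
        rw [inv_def, smul_mulVec, dotProduct_smul, mul_add, mul_one, smul_eq_mul, ← mul_assoc,
          Ring.mul_inverse_cancel _ hP, one_mul]

theorem det_add_vecMulVec {R : Type*} [CommRing R] [IsDomain R] {P : Matrix ι ι R}
    (hP : P.det ≠ 0) (u v : ι → R) :
    (P + vecMulVec u v).det = P.det + v ⬝ᵥ (P.adjugate *ᵥ u) := by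
  let f := algebraMap R (FractionRing R)
  have hf : Function.Injective f := IsFractionRing.injective R (FractionRing R)
  have hPf : IsUnit (f.mapMatrix P).det := by
    rw [← RingHom.map_det]
    exact (map_ne_zero_iff f hf).mpr hP |>.isUnit
  apply hf
  convert det_add_vecMulVec_of_isUnit_det hPf (f ∘ u) (f ∘ v) using 1
  · rw [RingHom.map_det]
    congr 1
    ext i j
    simp [vecMulVec_apply]
  · rw [map_add, RingHom.map_det, RingHom.map_dotProduct, ← RingHom.map_adjugate]
    congr 2
    ext i
    exact RingHom.map_mulVec f _ _ i

section CommRing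
variable {R : Type*} [CommRing R] (A : Matrix ι ι R) (u : ι → R)

noncomputable def adjCharVec : ι → R[X] :=
  (charmatrix A).adjugate *ᵥ fun i => C (u i)

noncomputable def adjCharCoeff (k : ℕ) : ι → R :=
  fun i => (adjCharVec A u i).coeff k

theorem charpoly_add_vecMulVec [IsDomain R] (v : ι → R) :
    (A + vecMulVec u v).charpoly = A.charpoly - ∑ i, v i • adjCharVec A u i := by
  have hchar : charmatrix (A + vecMulVec u v)
      = charmatrix A + vecMulVec (-fun i => C (u i)) (fun i => C (v i)) := by
    ext i j : 1
    by_cases h : i = j <;> simp [h, vecMulVec_apply] <;> ring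
  rw [charpoly, hchar, det_add_vecMulVec A.charpoly_monic.ne_zero, ← charpoly, sub_eq_add_neg,
    mulVec_neg, dotProduct_neg, adjCharVec, dotProduct]
  simp only [smul_eq_C_mul]

theorem charmatrix_mulVec_adjCharVec :
    charmatrix A *ᵥ adjCharVec A u = fun i => A.charpoly * C (u i) := by
  rw [adjCharVec, mulVec_mulVec, mul_adjugate, smul_mulVec, one_mulVec]
  rfl

theorem coeff_charmatrix_mulVec (q : ι → R[X]) (k : ℕ) (i : ι) :
    ((charmatrix A *ᵥ q) i).coeff k = (X * q i).coeff k - (A *ᵥ fun j => (q j).coeff k) i := by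
  simp [charmatrix_apply, mulVec, dotProduct, sub_mul, diagonal_apply]

theorem adjCharCoeff_eq_mulVec_add (k : ℕ) :
    adjCharCoeff A u k = A *ᵥ adjCharCoeff A u (k + 1) + A.charpoly.coeff (k + 1) • u := by
  ext i
  have h := coeff_charmatrix_mulVec A (adjCharVec A u) (k + 1) i
  rw [charmatrix_mulVec_adjCharVec, coeff_mul_C, coeff_X_mul] at h
  unfold adjCharCoeff
  simp only [Pi.add_apply, Pi.smul_apply, smul_eq_mul]
  linear_combination -h

theorem mulVec_adjCharCoeff_zero : A *ᵥ adjCharCoeff A u 0 = -(A.charpoly.coeff 0 • u) := by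
  ext i
  have h := coeff_charmatrix_mulVec A (adjCharVec A u) 0 i
  rw [charmatrix_mulVec_adjCharVec, coeff_mul_C, coeff_X_mul_zero] at h
  unfold adjCharCoeff
  simp only [Pi.neg_apply, Pi.smul_apply, smul_eq_mul]
  linear_combination h

theorem adjCharCoeff_eq_zero [Nontrivial R] {k : ℕ} (hk : Fintype.card ι ≤ k) :
    adjCharCoeff A u k = 0 := by
  obtain ⟨D, hD⟩ : ∃ D, ∀ k ≥ D, adjCharCoeff A u k = 0 :=
    ⟨(Finset.univ.sup fun i => (adjCharVec A u i).natDegree) + 1, fun k hk =>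
      funext fun i => coeff_eq_zero_of_natDegree_lt <|
        (Finset.le_sup (f := fun i => (adjCharVec A u i).natDegree) (Finset.mem_univ i)).trans_lt
          (by omega)⟩
  -- for `k ≥ card ι` the recursion has no `u`-term, so vanishing propagates down from `D`
  suffices ∀ j k, Fintype.card ι ≤ k → D ≤ k + j → adjCharCoeff A u k = 0 from
    this D k hk (by omega)
  intro j
  induction j with
  | zero => exact fun k _ h => hD k h
  | succ j ih =>
    intro k hk h
    rw [adjCharCoeff_eq_mulVec_add, ih (k + 1) (by omega) (by omega), mulVec_zero,
      coeff_eq_zero_of_natDegree_lt (by rw [charpoly_natDegree_eq_dim]; omega), zero_smul, add_zero]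

theorem adjCharCoeff_card_sub_one [Nontrivial R] [Nonempty ι] :
    adjCharCoeff A u (Fintype.card ι - 1) = u := by
  have h := adjCharCoeff_eq_mulVec_add A u (Fintype.card ι - 1)
  have hc : A.charpoly.coeff (Fintype.card ι) = 1 :=
    charpoly_natDegree_eq_dim A ▸ A.charpoly_monic.coeff_natDegree
  rwa [Nat.sub_add_cancel Fintype.card_pos, adjCharCoeff_eq_zero A u le_rfl, mulVec_zero, zero_add,
    hc, one_smul] at h

theorem span_range_adjCharCoeff_eq_top [Nontrivial R]
    (hu : Submodule.span R (Set.range fun j : ℕ => (A ^ j) *ᵥ u) = ⊤) :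
    Submodule.span R (Set.range (adjCharCoeff A u)) = ⊤ := by
  set W := Submodule.span R (Set.range (adjCharCoeff A u))
  have hu_mem : u ∈ W := by
    cases isEmpty_or_nonempty ι
    · rw [Subsingleton.elim u 0]
      exact W.zero_mem
    · rw [← adjCharCoeff_card_sub_one A u]
      exact Submodule.subset_span ⟨_, rfl⟩
  have hinv : ∀ v ∈ W, A *ᵥ v ∈ W := by
    intro v hv
    induction hv using Submodule.span_induction with
    | mem x hx =>
      obtain ⟨_ | k, rfl⟩ := hx
      · rw [mulVec_adjCharCoeff_zero]
        exact W.neg_mem (W.smul_mem _ hu_mem)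
      · rw [eq_sub_of_add_eq (adjCharCoeff_eq_mulVec_add A u k).symm]
        exact W.sub_mem (Submodule.subset_span ⟨k, rfl⟩) (W.smul_mem _ hu_mem)
    | zero => simp
    | add x y _ _ hx hy => rw [mulVec_add]; exact W.add_mem hx hy
    | smul a x _ hx => rw [mulVec_smul]; exact W.smul_mem a hx
  have hpow : ∀ j : ℕ, (A ^ j) *ᵥ u ∈ W := by
    intro j
    induction j with
    | zero => simpa using hu_mem
    | succ j ih => rw [pow_succ', ← mulVec_mulVec]; exact hinv _ ih
  rw [eq_top_iff, ← hu, Submodule.span_le]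
  rintro _ ⟨j, rfl⟩
  exact hpow j

end CommRing

theorem span_range_pow_mulVec_eq_top_of_isUnit_det {R : Type*} [CommRing R] {n : ℕ}
    {A : Matrix (Fin n) (Fin n) R} {b : Fin n → R}
    (h : IsUnit (of fun i j : Fin n => ((A ^ (j : ℕ)) *ᵥ b) i).det) :
    Submodule.span R (Set.range fun j : ℕ => (A ^ j) *ᵥ b) = ⊤ := by
  set Ctrb := of fun i j : Fin n => ((A ^ (j : ℕ)) *ᵥ b) i
  have hCtrb : LinearMap.range Ctrb.mulVecLin = ⊤ := LinearMap.range_eq_top.mpr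
    (mulVec_surjective_iff_isUnit.mpr ((isUnit_iff_isUnit_det Ctrb).mpr h))
  rw [eq_top_iff, ← hCtrb, range_mulVecLin]
  exact Submodule.span_mono (by rintro _ ⟨j, rfl⟩; exact ⟨j, rfl⟩)

theorem span_range_pow_mulVec_mulVec_eq_top {R : Type*} [CommRing R] {A : Matrix ι ι R}
    {b : ι → R} (hA : IsUnit A.det)
    (h : Submodule.span R (Set.range fun j : ℕ => (A ^ j) *ᵥ b) = ⊤) :
    Submodule.span R (Set.range fun j : ℕ => (A ^ j) *ᵥ (A *ᵥ b)) = ⊤ := by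
  have himage : (Set.range fun j : ℕ => (A ^ j) *ᵥ (A *ᵥ b))
      = A.mulVecLin '' Set.range fun j : ℕ => (A ^ j) *ᵥ b := by
    rw [← Set.range_comp]
    congr 1 with j
    simp only [Function.comp_apply, mulVecLin_apply, mulVec_mulVec, ← pow_succ, ← pow_succ']
  rw [himage, Submodule.span_image, h, Submodule.map_top, LinearMap.range_eq_top]
  exact mulVec_surjective_iff_isUnit.mpr ((isUnit_iff_isUnit_det _).mpr hA)

section Field
variable {K : Type*} [Field K] {A : Matrix ι ι K} {u : ι → K}

theorem coeff_sum_smul_adjCharVec (M : ι → K) (k : ℕ) :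
    (∑ i, M i • adjCharVec A u i).coeff k = M ⬝ᵥ adjCharCoeff A u k := by
  simp [finsetSum_coeff, dotProduct, adjCharCoeff]

theorem injective_linearCombination_adjCharVec
    (hu : Submodule.span K (Set.range fun j : ℕ => (A ^ j) *ᵥ u) = ⊤) :
    Function.Injective (Fintype.linearCombination K (adjCharVec A u)) := by
  rw [← LinearMap.ker_eq_bot, Submodule.eq_bot_iff]
  intro M hM
  have hperp : dotProductBilin K K M = 0 :=
    LinearMap.ext_on_range (span_range_adjCharCoeff_eq_top A u hu) fun k => by
      simpa [← coeff_sum_smul_adjCharVec, Fintype.linearCombination_apply] using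
        congr_arg (coeff · k) (LinearMap.mem_ker.mp hM)
  exact dotProduct_eq_zero M fun v => by simpa using LinearMap.congr_fun hperp v

theorem range_linearCombination_adjCharVec
    (hu : Submodule.span K (Set.range fun j : ℕ => (A ^ j) *ᵥ u) = ⊤) :
    LinearMap.range (Fintype.linearCombination K (adjCharVec A u)) =
      degreeLT K (Fintype.card ι) := by
  refine Submodule.eq_of_le_of_finrank_eq ?_ ?_
  · rintro _ ⟨M, rfl⟩
    rw [mem_degreeLT, degree_lt_iff_coeff_zero]
    intro k hk
    rw [Fintype.linearCombination_apply, coeff_sum_smul_adjCharVec, adjCharCoeff_eq_zero A u hk,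
      dotProduct_zero]
  · rw [LinearMap.finrank_range_of_inj (injective_linearCombination_adjCharVec hu),
      (degreeLTEquiv K _).finrank_eq, Module.finrank_fin_fun, Module.finrank_fintype_fun_eq_card]

theorem exists_charpoly_add_vecMulVec_eq
    (hu : Submodule.span K (Set.range fun j : ℕ => (A ^ j) *ᵥ u) = ⊤) {p : K[X]} (hp : p.Monic)
    (hdeg : p.natDegree = Fintype.card ι) :
    ∃ M : ι → K, (A + vecMulVec u M).charpoly = p := by
  have hmem : A.charpoly - p ∈ degreeLT K (Fintype.card ι) := by
    rw [mem_degreeLT, ← charpoly_degree_eq_dim A]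
    refine degree_sub_lt_left ?_ A.charpoly_monic.ne_zero
      (by rw [A.charpoly_monic.leadingCoeff, hp.leadingCoeff])
    rw [charpoly_degree_eq_dim, degree_eq_natDegree hp.ne_zero, hdeg]
  obtain ⟨M, hM⟩ := range_linearCombination_adjCharVec hu ▸ hmem
  refine ⟨M, ?_⟩
  rw [charpoly_add_vecMulVec, ← Fintype.linearCombination_apply, hM, sub_sub_cancel]

end Field

theorem exists_exp_vecMulVec_eq_one_add (b M : ι → ℝ) (h : 0 < 1 + M ⬝ᵥ b) :
    ∃ K : ι → ℝ, NormedSpace.exp (vecMulVec b K) = 1 + vecMulVec b M := by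
  have hsq : vecMulVec b M * vecMulVec b M = (M ⬝ᵥ b) • vecMulVec b M := by
    rw [vecMulVec_mul_vecMulVec, vecMulVec_smul]
  by_cases hs : M ⬝ᵥ b = 0
  · refine ⟨M, NormedSpace.exp_eq_one_add_of_mul_self_eq_zero ?_⟩
    rw [hsq, hs, zero_smul]
  · set s := M ⬝ᵥ b
    have hP : IsIdempotentElem (s⁻¹ • vecMulVec b M) := by
      rw [IsIdempotentElem, smul_mul_smul_comm, hsq, smul_smul, mul_assoc, inv_mul_cancel₀ hs,
        mul_one]
    refine ⟨(Real.log (1 + s) / s) • M, ?_⟩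
    rw [vecMulVec_smul, div_eq_mul_inv, mul_smul, hP.exp_smul, Real.exp_log h, add_sub_cancel_left,
      smul_smul, mul_inv_cancel₀ hs, one_smul]

end Matrix

theorem stmt_0_general (n : ℕ)
    (A : Matrix (Fin n) (Fin n) ℝ) (hA : 0 < A.det)
    (b : Fin n → ℝ)
    (hctrb : IsUnit (Matrix.of fun (i j : Fin n) => ((A ^ (j : ℕ)) *ᵥ b) i).det)
    (R : Matrix (Fin n) (Fin n) ℝ) (hR : 0 < R.det) :
    ∃ K : Fin n → ℝ,
      (A * NormedSpace.exp (Matrix.vecMulVec b K)).charpoly = R.charpoly := by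
  have hAb := span_range_pow_mulVec_mulVec_eq_top hA.ne'.isUnit
    (span_range_pow_mulVec_eq_top_of_isUnit_det hctrb)
  obtain ⟨M, hM⟩ := exists_charpoly_add_vecMulVec_eq hAb R.charpoly_monic
    (charpoly_natDegree_eq_dim R)
  have hfactor : A + vecMulVec (A *ᵥ b) M = A * (1 + vecMulVec b M) := by
    rw [Matrix.mul_add, Matrix.mul_one, mul_vecMulVec]
  have hdet : A.det * (1 + M ⬝ᵥ b) = R.det := by
    rw [← det_one_add_vecMulVec, ← det_mul, ← hfactor, det_eq_sign_charpoly_coeff, hM,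
      ← det_eq_sign_charpoly_coeff]
  obtain ⟨K, hK⟩ := exists_exp_vecMulVec_eq_one_add b M (pos_of_mul_pos_right (hdet ▸ hR) hA.le)
  exact ⟨K, by rw [hK, ← hfactor, hM]⟩

/-- **Brunovsky spectrum assignment (Lemma A.1).**
If `(A, b)` is controllable (the controllability matrix `[b, Ab, …, A^{n-1}b]` is
invertible), `det A > 0`, and `R` is a real matrix with `det R > 0`, then there is a
gain vector `K` such that `A · exp(b Kᵀ)` has the same characteristic polynomial as `R`
(hence the same spectrum with multiplicities). -/
theorem stmt_0 (n : ℕ) (hn : 1 ≤ n)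
    (A : Matrix (Fin n) (Fin n) ℝ) (hA : 0 < A.det)
    (b : Fin n → ℝ)
    (hctrb : IsUnit (Matrix.of fun (i j : Fin n) => ((A ^ (j : ℕ)) *ᵥ b) i).det)
    (R : Matrix (Fin n) (Fin n) ℝ) (hR : 0 < R.det) :
    ∃ K : Fin n → ℝ,
      (A * NormedSpace.exp (Matrix.vecMulVec b K)).charpoly = R.charpoly :=
  stmt_0_general n A hA b hctrb R hR
end

section
/- Let T > 0, ε > 0, n ≥ 1, and let A : ℝ → ℂ^{n×n} and b, K : ℝ → ℂⁿ be continuous and T-periodic. Let λ ∈ ℂ with λ ≠ 1−ε and set μ = 1 − ε/(λ−(1−ε)). Suppose x, x̃ : ℝ → ℂⁿ satisfy for all t ∈ [−T,0]: (i) λ·x̃(t) = (1−ε)·x̃(t) + ε·x(t); (ii) x′(t) = A(t)x(t) + (K(t)·(x̃(t)−x(t)))·b(t), where · in the scalar factor is the dot product; (iii) x(0) = λ·x(−T); and (iv) x(−T) ≠ 0. Let Y : ℝ → ℂ^{n×n} satisfy Y(0) = I and Y′(t) = (A(t) − μ·b(t)K(t)ᵀ)·Y(t) for all t ∈ [0,T].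 Then det(λ·I − Y(T)) = 0. -/
/-!
On `[-T, 0]` the recurrence gives `x̃ - x = -μ x`, so the feedback term `(K ⬝ᵥ (x̃ - x)) b` equals
`-μ (b Kᵀ) x` and `x` solves the linear equation `x' = M x` with `M = A - μ b Kᵀ`. By periodicity of
`M`, `t ↦ Y(t + T) x(-T)` solves the same equation with the same value at `-T`, so uniqueness for
linear ODEs gives `Y(T) x(-T) = x(0) = λ x(-T)`: `x(-T) ≠ 0` is an eigenvector of `Y(T)` for `λ`.
-/

open Matrix Set

section LinearODE

variable {ι 𝕜 : Type*} [Fintype ι] [RCLike 𝕜]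

attribute [local instance] Matrix.linftyOpNormedAddCommGroup in
theorem exists_lipschitzWith_mulVec_of_continuousOn {M : ℝ → Matrix ι ι 𝕜} {s : Set ℝ}
    (hs : IsCompact s) (hM : ContinuousOn M s) :
    ∃ C, ∀ t ∈ s, LipschitzWith C (M t *ᵥ ·) := by
  obtain ⟨C, hC⟩ := hs.exists_bound_of_continuousOn hM
  refine ⟨C.toNNReal, fun t ht => LipschitzWith.of_dist_le_mul fun v w => ?_⟩
  rw [dist_eq_norm, dist_eq_norm, ← mulVec_sub,
    Real.coe_toNNReal _ ((norm_nonneg _).trans (hC t ht))]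
  exact (linfty_opNorm_mulVec _ _).trans (by gcongr; exact hC t ht)

theorem eqOn_Icc_of_hasDerivAt_mulVec {M : ℝ → Matrix ι ι 𝕜} {f g : ℝ → ι → 𝕜} {a b : ℝ}
    (hM : ContinuousOn M (Icc a b))
    (hf : ∀ t ∈ Icc a b, HasDerivAt f (M t *ᵥ f t) t)
    (hg : ∀ t ∈ Icc a b, HasDerivAt g (M t *ᵥ g t) t) (ha : f a = g a) :
    EqOn f g (Icc a b) := by
  obtain ⟨C, hC⟩ := exists_lipschitzWith_mulVec_of_continuousOn isCompact_Icc hM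
  exact ODE_solution_unique_of_mem_Icc_right (s := fun _ => univ)
    (fun t ht => (hC t (Ico_subset_Icc_self ht)).lipschitzOnWith)
    (fun t ht => (hf t ht).continuousAt.continuousWithinAt)
    (fun t ht => (hf t (Ico_subset_Icc_self ht)).hasDerivWithinAt) (fun _ _ => mem_univ _)
    (fun t ht => (hg t ht).continuousAt.continuousWithinAt)
    (fun t ht => (hg t (Ico_subset_Icc_self ht)).hasDerivWithinAt) (fun _ _ => mem_univ _) ha

theorem hasDerivAt_mulVec_of_hasDerivAt_apply {Y : ℝ → Matrix ι ι 𝕜} {Y' : Matrix ι ι 𝕜}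
    {t : ℝ} (hY : ∀ i j, HasDerivAt (fun s => Y s i j) (Y' i j) t) (c : ι → 𝕜) :
    HasDerivAt (fun s => Y s *ᵥ c) (Y' *ᵥ c) t :=
  hasDerivAt_pi.2 fun i => HasDerivAt.fun_sum fun j _ => (hY i j).mul_const (c j)

end LinearODE

theorem sub_eq_neg_smul_of_smul_eq {𝕜 V : Type*} [Field 𝕜] [AddCommGroup V] [Module 𝕜 V]
    {lam ε : 𝕜} {y z : V} (hlam : lam ≠ 1 - ε) (h : lam • y = (1 - ε) • y + ε • z) :
    y - z = -(1 - ε / (lam - (1 - ε))) • z := by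
  have hd : lam - (1 - ε) ≠ 0 := sub_ne_zero.2 hlam
  have hy : y = (ε / (lam - (1 - ε))) • z := by
    rw [div_eq_inv_mul, mul_smul, eq_inv_smul_iff₀ hd, sub_smul, h, add_sub_cancel_left]
  rw [hy, neg_sub, sub_smul, one_smul]

theorem det_sub_eq_zero_of_mulVec_eq_smul {ι 𝕜 : Type*} [Fintype ι] [DecidableEq ι] [Field 𝕜]
    {P : Matrix ι ι 𝕜} {lam : 𝕜} {c : ι → 𝕜} (hc : c ≠ 0) (h : P *ᵥ c = lam • c) :
    (lam • (1 : Matrix ι ι 𝕜) - P).det = 0 :=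
  exists_mulVec_eq_zero_iff.1 ⟨c, hc, by rw [sub_mulVec, smul_mulVec, one_mulVec, h, sub_self]⟩

theorem sub_smul_vecMulVec_mulVec {ι R : Type*} [Fintype ι] [CommRing R]
    (A : Matrix ι ι R) (b K x : ι → R) (μ : R) :
    (A - μ • vecMulVec b K) *ᵥ x = A *ᵥ x + (K ⬝ᵥ (-μ • x)) • b := by
  rw [sub_mulVec, smul_mulVec, vecMulVec_mulVec, dotProduct_smul, op_smul_eq_smul, smul_smul,
    smul_eq_mul, neg_mul, neg_smul, sub_eq_add_neg]

theorem stmt_1_general (n : ℕ) (T ε : ℝ) (hT : 0 < T)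
    (A : ℝ → Matrix (Fin n) (Fin n) ℂ) (b K : ℝ → Fin n → ℂ)
    (hAc : Continuous A) (hbc : Continuous b) (hKc : Continuous K)
    (hAp : Function.Periodic A T) (hbp : Function.Periodic b T)
    (hKp : Function.Periodic K T)
    (lam : ℂ) (hlam : lam ≠ 1 - (ε : ℂ))
    (μ : ℂ) (hμ : μ = 1 - (ε : ℂ) / (lam - (1 - (ε : ℂ))))
    (x xt : ℝ → Fin n → ℂ)
    (hrec : ∀ t ∈ Icc (-T) (0 : ℝ), lam • xt t = (1 - (ε : ℂ)) • xt t + (ε : ℂ) • x t)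
    (hode : ∀ t ∈ Icc (-T) (0 : ℝ),
      HasDerivAt x ((A t) *ᵥ (x t) + ((K t) ⬝ᵥ (xt t - x t)) • b t) t)
    (hbc0 : x 0 = lam • x (-T))
    (hx0 : x (-T) ≠ 0)
    (Y : ℝ → Matrix (Fin n) (Fin n) ℂ)
    (hY0 : Y 0 = 1)
    (hYode : ∀ t ∈ Icc (0 : ℝ) T, ∀ i j,
      HasDerivAt (fun s => Y s i j) (((A t - μ • Matrix.vecMulVec (b t) (K t)) * Y t) i j) t) :
    Matrix.det (lam • (1 : Matrix (Fin n) (Fin n) ℂ) - Y T) = 0 := by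
  set M : ℝ → Matrix (Fin n) (Fin n) ℂ := fun t => A t - μ • vecMulVec (b t) (K t)
  have hM : Continuous M := hAc.sub ((hbc.matrix_vecMulVec hKc).const_smul μ)
  have hMp : Function.Periodic M T := fun t => by simp only [M, hAp t, hbp t, hKp t]
  have hx : ∀ t ∈ Icc (-T) 0, HasDerivAt x (M t *ᵥ x t) t := fun t ht => by
    have hfeedback : xt t - x t = -μ • x t := hμ ▸ sub_eq_neg_smul_of_smul_eq hlam (hrec t ht)
    rw [sub_smul_vecMulVec_mulVec, ← hfeedback]
    exact hode t ht
  have hYx : ∀ t ∈ Icc (-T) 0, HasDerivAt (fun s => Y (s + T) *ᵥ x (-T))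
      (M t *ᵥ (Y (t + T) *ᵥ x (-T))) t := fun t ht => by
    have hmem : t + T ∈ Icc 0 T := ⟨by linarith [ht.1], by linarith [ht.2]⟩
    rw [mulVec_mulVec, ← hMp t]
    exact hasDerivAt_mulVec_of_hasDerivAt_apply
      (fun i j => (hYode _ hmem i j).comp_add_const t T) _
  have hsol := eqOn_Icc_of_hasDerivAt_mulVec hM.continuousOn hx hYx
    (by rw [neg_add_cancel, hY0, one_mulVec])
  refine det_sub_eq_zero_of_mulVec_eq_smul hx0 ?_
  rw [← hbc0, hsol (right_mem_Icc.2 (neg_nonpos.2 hT.le))]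
  simp only [zero_add]

/-- **Characteristic equation for Floquet multipliers (Lemma A.2).**
If `(x, x̃)` is an eigenfunction with eigenvalue `λ ≠ 1 - ε` of the time-`T` map of the
linearised extended time-delayed feedback system, then `λ` is a root of
`det(λ I − Y(T))`, where `Y` is the fundamental solution of
`Y' = (A(t) − μ b(t) K(t)ᵀ) Y` with `μ = 1 − ε/(λ − (1 − ε))`. -/
theorem stmt_1 (n : ℕ) (hn : 1 ≤ n) (T ε : ℝ) (hT : 0 < T) (hε : 0 < ε)
    (A : ℝ → Matrix (Fin n) (Fin n) ℂ) (b K : ℝ → Fin n → ℂ)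
    (hAc : Continuous A) (hbc : Continuous b) (hKc : Continuous K)
    (hAp : Function.Periodic A T) (hbp : Function.Periodic b T)
    (hKp : Function.Periodic K T)
    (lam : ℂ) (hlam : lam ≠ 1 - (ε : ℂ))
    (μ : ℂ) (hμ : μ = 1 - (ε : ℂ) / (lam - (1 - (ε : ℂ))))
    (x xt : ℝ → Fin n → ℂ)
    (hrec : ∀ t ∈ Icc (-T) (0 : ℝ), lam • xt t = (1 - (ε : ℂ)) • xt t + (ε : ℂ) • x t)
    (hode : ∀ t ∈ Icc (-T) (0 : ℝ),
      HasDerivAt x ((A t) *ᵥ (x t) + ((K t) ⬝ᵥ (xt t - x t)) • b t) t)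
    (hbc0 : x 0 = lam • x (-T))
    (hx0 : x (-T) ≠ 0)
    (Y : ℝ → Matrix (Fin n) (Fin n) ℂ)
    (hY0 : Y 0 = 1)
    (hYode : ∀ t ∈ Icc (0 : ℝ) T, ∀ i j,
      HasDerivAt (fun s => Y s i j) (((A t - μ • Matrix.vecMulVec (b t) (K t)) * Y t) i j) t) :
    Matrix.det (lam • (1 : Matrix (Fin n) (Fin n) ℂ) - Y T) = 0 :=
  stmt_1_general n T ε hT A b K hAc hbc hKc hAp hbp hKp lam hlam μ hμ x xt hrec hode hbc0 hx0 Y hY0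
    hYode
end

section
/- Let n ≥ 1 and let P : ℂ → ℂ^{n×n} be analytic on all of ℂ. Suppose there exists λ₀ ∈ ℂ with |λ₀| > 1 and det(λ₀·I − P(1)) = 0. Then there exists ε_max ∈ (0,1) such that for every ε ∈ (0, ε_max) there exists λ ∈ ℂ with |λ| > 1, λ ≠ 1−ε, and det(λ·I − P(1 − ε/(λ−(1−ε)))) = 0. -/
/-!
For `ε = 0` the extended characteristic function `det(λ I - P(1 - ε/(λ - (1 - ε))))` is the
characteristic polynomial of `P(1)`, so its zeros are isolated and we may pick a small circle
around `λ₀`, inside `{|λ| > 1}`, on which it does not vanish. The extended characteristic function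
is jointly continuous and holomorphic in `λ` away from `λ = 1 - ε`, so as `ε → 0` it converges
uniformly on the closed disc, and by the minimum modulus principle it keeps a zero inside the
disc for all small `ε`.
-/

open Matrix Set Metric Filter Topology

theorem differentiableAt_det {𝕜 ι : Type*} [NontriviallyNormedField 𝕜] [Fintype ι]
    [DecidableEq ι] {M : 𝕜 → Matrix ι ι 𝕜} {x : 𝕜}
    (h : ∀ i j, DifferentiableAt 𝕜 (fun y => M y i j) x) :
    DifferentiableAt 𝕜 (fun y => (M y).det) x := by
  simp_rw [det_apply']
  exact DifferentiableAt.fun_sum fun σ _ =>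
    (differentiableAt_const _).mul (DifferentiableAt.fun_finsetProd fun i _ => h _ _)

theorem Matrix.eval_charpoly_eq_det_smul_one_sub {R ι : Type*} [CommRing R] [Fintype ι]
    [DecidableEq ι] (A : Matrix ι ι R) (t : R) : A.charpoly.eval t = (t • 1 - A).det := by
  rw [eval_charpoly, smul_one_eq_diagonal, scalar_apply]

theorem Polynomial.exists_radius_forall_mem_sphere_eval_ne_zero {K : Type*} [NormedField K]
    {p : Polynomial K} (hp : p ≠ 0) (c : K) {ρ : ℝ} (hρ : 0 < ρ) :
    ∃ r ∈ Ioo 0 ρ, ∀ z ∈ sphere c r, p.eval z ≠ 0 := by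
  have hfin : ((dist · c) '' {z | p.IsRoot z}).Finite :=
    (Polynomial.finite_setOfPred_isRoot hp).image _
  obtain ⟨r, hr, hr'⟩ := ((Ioo_infinite hρ).sdiff hfin).nonempty
  exact ⟨r, hr, fun z hz hroot => hr' ⟨z, hroot, hz⟩⟩

theorem ContinuousOn.tendstoUniformlyOn_of_isCompact {α β γ : Type*} [UniformSpace α]
    [LocallyCompactSpace α] [UniformSpace β] [UniformSpace γ] {F : α → β → γ} {x : α}
    {U : Set α} {K : Set β} (hU : U ∈ 𝓝 x) (hK : IsCompact K) (hF : ContinuousOn ↿F (U ×ˢ K)) :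
    TendstoUniformlyOn F (F x) (𝓝 x) K := by
  obtain ⟨L, hxL, hLU, hL⟩ := LocallyCompactSpace.local_compact_nhds _ _ hU
  have : UniformContinuousOn ↿F (L ×ˢ K) :=
    (hL.prod hK).uniformContinuousOn_of_continuous (hF.mono (prod_mono hLU Subset.rfl))
  simpa only [nhdsWithin_eq_nhds.2 hxL] using this.tendstoUniformlyOn (mem_of_mem_nhds hxL)

theorem exists_mem_ball_eq_zero_of_norm_lt {g : ℂ → ℂ} {c : ℂ} {r m : ℝ}
    (hg : DiffContOnCl ℂ g (ball c r)) (hr : 0 < r) (hc : ‖g c‖ < m)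
    (hm : ∀ z ∈ sphere c r, m ≤ ‖g z‖) : ∃ z ∈ ball c r, g z = 0 := by
  by_contra! hne
  have hm0 : 0 < m := (norm_nonneg _).trans_lt hc
  have hne' : ∀ z ∈ closedBall c r, g z ≠ 0 := by
    intro z hz
    rcases (mem_closedBall.1 hz).lt_or_eq with hz | hz
    · exact hne z (mem_ball.2 hz)
    · exact norm_pos_iff.1 (hm0.trans_le (hm z (mem_sphere.2 hz)))
  have hinv : DiffContOnCl ℂ (fun z => (g z)⁻¹) (ball c r) :=
    hg.inv fun z hz => hne' z (by rwa [closure_ball c hr.ne'] at hz)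
  have hle : ‖(g c)⁻¹‖ ≤ m⁻¹ := by
    refine Complex.norm_le_of_forall_mem_frontier_norm_le isBounded_ball hinv (fun z hz => ?_)
      (subset_closure (mem_ball_self hr))
    rw [frontier_ball c hr.ne'] at hz
    rw [norm_inv]
    exact inv_anti₀ hm0 (hm z hz)
  rw [norm_inv] at hle
  have := (inv_le_inv₀ (norm_pos_iff.2 (hne' c (mem_closedBall_self hr.le))) hm0).1 hle
  linarith

theorem TendstoUniformlyOn.eventually_exists_mem_ball_eq_zero {ι : Type*} {l : Filter ι}
    {F : ι → ℂ → ℂ} {f : ℂ → ℂ} {c : ℂ} {r : ℝ}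
    (hF : TendstoUniformlyOn F f l (closedBall c r)) (hr : 0 < r)
    (hFd : ∀ᶠ i in l, DiffContOnCl ℂ (F i) (ball c r)) (hf : ContinuousOn f (sphere c r))
    (hfc : f c = 0) (hfs : ∀ z ∈ sphere c r, f z ≠ 0) :
    ∀ᶠ i in l, ∃ z ∈ ball c r, F i z = 0 := by
  obtain ⟨z₀, hz₀, hmin⟩ := (isCompact_sphere c r).exists_isMinOn
    (NormedSpace.sphere_nonempty.2 hr.le) hf.norm
  have hm : 0 < ‖f z₀‖ := norm_pos_iff.2 (hfs z₀ hz₀)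
  filter_upwards [hFd, Metric.tendstoUniformlyOn_iff.1 hF _ (half_pos hm)] with i hdiff hclose
  refine exists_mem_ball_eq_zero_of_norm_lt hdiff hr (m := ‖f z₀‖ / 2) ?_ fun z hz => ?_
  · simpa [hfc] using hclose c (mem_closedBall_self hr.le)
  · have h1 := hclose z (sphere_subset_closedBall hz)
    have h2 : ‖f z₀‖ ≤ ‖f z‖ := hmin hz
    rw [dist_eq_norm] at h1
    linarith [norm_sub_norm_le (f z) (F i z)]

theorem one_add_norm_lt_norm_of_mem_closedBall {w z c : ℂ} {r : ℝ} (hw : ‖w‖ < ‖c‖ - 1 - r)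
    (hz : z ∈ closedBall c r) : 1 + ‖w‖ < ‖z‖ := by
  rw [mem_closedBall, dist_eq_norm] at hz
  linarith [norm_sub_norm_le c z, norm_sub_rev z c]

theorem ne_one_sub_of_one_add_norm_lt {w z : ℂ} (h : 1 + ‖w‖ < ‖z‖) : z ≠ 1 - w := by
  rintro rfl
  linarith [norm_sub_le (1 : ℂ) w, norm_one (α := ℂ)]

section ExtendedCharFun

variable {ι : Type*} [Fintype ι] [DecidableEq ι]

/-- The zeros `λ ≠ 1 - ε` of `extendedCharFun P ε` are the Floquet multipliers of extended
time-delayed feedback with parameter `ε`. -/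
noncomputable def extendedCharFun (P : ℂ → Matrix ι ι ℂ) (ε lam : ℂ) : ℂ :=
  (lam • (1 : Matrix ι ι ℂ) - P (1 - ε / (lam - (1 - ε)))).det

theorem extendedCharFun_zero (P : ℂ → Matrix ι ι ℂ) (lam : ℂ) :
    extendedCharFun P 0 lam = (lam • (1 : Matrix ι ι ℂ) - P 1).det := by
  rw [extendedCharFun, zero_div, sub_zero]

theorem continuousOn_extendedCharFun {P : ℂ → Matrix ι ι ℂ} (hP : Continuous P) :
    ContinuousOn ↿(extendedCharFun P) {p | p.2 ≠ 1 - p.1} := by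
  have hμ : ContinuousOn (fun p : ℂ × ℂ => 1 - p.1 / (p.2 - (1 - p.1))) {p | p.2 ≠ 1 - p.1} :=
    continuousOn_const.sub (continuousOn_fst.div (by fun_prop) fun p hp => sub_ne_zero.2 hp)
  exact continuous_id.matrix_det.comp_continuousOn
    ((continuousOn_snd.smul continuousOn_const).sub (hP.comp_continuousOn hμ))

theorem differentiableAt_extendedCharFun {P : ℂ → Matrix ι ι ℂ}
    (hP : ∀ i j, Differentiable ℂ fun w => P w i j) {ε lam : ℂ} (h : lam ≠ 1 - ε) :
    DifferentiableAt ℂ (extendedCharFun P ε) lam := by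
  refine differentiableAt_det fun i j => ?_
  simp only [Matrix.sub_apply, Matrix.smul_apply, smul_eq_mul]
  have hμ : DifferentiableAt ℂ (fun z => 1 - ε / (z - (1 - ε))) lam := by
    fun_prop (disch := exact sub_ne_zero.2 h)
  exact (differentiableAt_id.mul_const _).sub ((hP i j _).comp lam hμ)

theorem eventually_exists_one_add_norm_lt_extendedCharFun_eq_zero {P : ℂ → Matrix ι ι ℂ}
    (hP : ∀ i j, Differentiable ℂ fun w => P w i j) {c : ℂ} (hc : 1 < ‖c‖)
    (hroot : (c • (1 : Matrix ι ι ℂ) - P 1).det = 0) :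
    ∀ᶠ ε in 𝓝 0, ∃ z, 1 + ‖ε‖ < ‖z‖ ∧ extendedCharFun P ε z = 0 := by
  have hPc : Continuous P := continuous_pi fun i => continuous_pi fun j => (hP i j).continuous
  obtain ⟨r, ⟨hr, hrc⟩, hsphere⟩ := Polynomial.exists_radius_forall_mem_sphere_eval_ne_zero
    (P 1).charpoly_monic.ne_zero c (sub_pos.2 hc)
  set U := ball (0 : ℂ) (‖c‖ - 1 - r)
  have hU : U ∈ 𝓝 0 := ball_mem_nhds 0 (by linarith)
  have hfar : ∀ ε ∈ U, ∀ z ∈ closedBall c r, 1 + ‖ε‖ < ‖z‖ := fun ε hε _ hz =>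
    one_add_norm_lt_norm_of_mem_closedBall (mem_ball_zero_iff.1 hε) hz
  have hdiff : ∀ ε ∈ U, DiffContOnCl ℂ (extendedCharFun P ε) (ball c r) := fun ε hε =>
    DifferentiableOn.diffContOnCl <| by
      rw [closure_ball _ hr.ne']
      exact fun z hz => (differentiableAt_extendedCharFun hP
        (ne_one_sub_of_one_add_norm_lt (hfar ε hε z hz))).differentiableWithinAt
  have hunif : TendstoUniformlyOn (extendedCharFun P) (extendedCharFun P 0) (𝓝 0)
      (closedBall c r) :=
    ((continuousOn_extendedCharFun hPc).mono fun p hp =>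
      ne_one_sub_of_one_add_norm_lt (hfar _ hp.1 _ hp.2)).tendstoUniformlyOn_of_isCompact
        hU (isCompact_closedBall _ _)
  have hzeros := hunif.eventually_exists_mem_ball_eq_zero hr (eventually_of_mem hU hdiff)
    ((hdiff 0 (mem_of_mem_nhds hU)).continuousOn.mono
      (closure_ball c hr.ne' ▸ sphere_subset_closedBall))
    (by rwa [extendedCharFun_zero])
    fun z hz => by
      rw [extendedCharFun_zero, ← eval_charpoly_eq_det_smul_one_sub]
      exact hsphere z hz
  filter_upwards [hzeros, hU] with ε ⟨z, hz, hzero⟩ hε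
  exact ⟨z, hfar ε hε z (ball_subset_closedBall hz), hzero⟩

end ExtendedCharFun

theorem stmt_2_general (n : ℕ)
    (P : ℂ → Matrix (Fin n) (Fin n) ℂ)
    (hP : ∀ (z : ℂ) (i j : Fin n), AnalyticAt ℂ (fun w => P w i j) z)
    (lam0 : ℂ) (hlam0 : 1 < ‖lam0‖)
    (hroot : Matrix.det (lam0 • (1 : Matrix (Fin n) (Fin n) ℂ) - P 1) = 0) :
    ∃ εmax ∈ Ioo (0 : ℝ) 1, ∀ ε ∈ Ioo (0 : ℝ) εmax, ∃ lam : ℂ,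
      1 < ‖lam‖ ∧ lam ≠ 1 - (ε : ℂ) ∧
      Matrix.det (lam • (1 : Matrix (Fin n) (Fin n) ℂ)
        - P (1 - (ε : ℂ) / (lam - (1 - (ε : ℂ))))) = 0 := by
  have hPd : ∀ i j, Differentiable ℂ fun w => P w i j := fun i j z => (hP z i j).differentiableAt
  obtain ⟨δ, hδ, hball⟩ := Metric.eventually_nhds_iff_ball.1
    (eventually_exists_one_add_norm_lt_extendedCharFun_eq_zero hPd hlam0 hroot)
  refine ⟨min δ (1 / 2), ⟨by positivity, by linarith [min_le_right δ (1 / 2)]⟩, ?_⟩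
  rintro ε ⟨hε0, hε⟩
  have hεδ : (ε : ℂ) ∈ ball 0 δ := by
    rw [mem_ball_zero_iff, Complex.norm_real, Real.norm_of_nonneg hε0.le]
    linarith [min_le_left δ (1 / 2)]
  obtain ⟨lam, hlam, hzero⟩ := hball ε hεδ
  exact ⟨lam, by linarith [norm_nonneg (ε : ℂ)], ne_one_sub_of_one_add_norm_lt hlam, hzero⟩

/-- **Lemma 3.1 (ETDF stabilisation implies classical stabilisation), characteristic form.**
If the analytic matrix family `P : ℂ → ℂ^{n×n}` has a root `λ₀` of `det(λ I − P(1))`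
outside the unit circle, then for all sufficiently small `ε > 0` the characteristic
function `λ ↦ det(λ I − P(1 − ε/(λ − (1 − ε))))` has a root outside the unit circle. -/
theorem stmt_2 (n : ℕ) (hn : 1 ≤ n)
    (P : ℂ → Matrix (Fin n) (Fin n) ℂ)
    (hP : ∀ (z : ℂ) (i j : Fin n), AnalyticAt ℂ (fun w => P w i j) z)
    (lam0 : ℂ) (hlam0 : 1 < ‖lam0‖)
    (hroot : Matrix.det (lam0 • (1 : Matrix (Fin n) (Fin n) ℂ) - P 1) = 0) :
    ∃ εmax ∈ Ioo (0 : ℝ) 1, ∀ ε ∈ Ioo (0 : ℝ) εmax, ∃ lam : ℂ,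
      1 < ‖lam‖ ∧ lam ≠ 1 - (ε : ℂ) ∧
      Matrix.det (lam • (1 : Matrix (Fin n) (Fin n) ℂ)
        - P (1 - (ε : ℂ) / (lam - (1 - (ε : ℂ))))) = 0 :=
  stmt_2_general n P hP lam0 hlam0 hroot
end

section
/- Let T > 0, n ≥ 1, let A : ℝ → ℝ^{n×n} and b : ℝ → ℝⁿ be continuous and T-periodic, let K₀ ∈ ℝⁿ and μ ∈ ℂ. For δ ∈ (0,T) let Δ_δ : ℝ → ℝ be the T-periodic function with Δ_δ(t) = 1/δ if t mod T ∈ [0,δ] and Δ_δ(t) = 0 otherwise. For each δ ∈ (0,T) let Y_δ : [0,T] → ℂ^{n×n} be continuous with Y_δ(0) = I and Y_δ′(t) = (A(t) − μ·Δ_δ(t)·b(t)K₀ᵀ)·Y_δ(t) for all t ∈ (0,T) with t ≠ δ (real entries viewed as complex). Let P₀ = Y(T) where Y : [0,T] → ℂ^{n×n} is the solution of Y′(t) = A(t)Y(t), Y(0) = I. Then Y_δ(T) converges to P₀·exp(−μ·b(0)K₀ᵀ) as δ → 0⁺. -/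
/-! On `[0, δ]` the impulse term `δ⁻¹ μ b(t)K₀ᵀ` dominates. Grönwall's inequality compares `Y_δ`
there with `t ↦ exp (-(t/δ) μ b(0)K₀ᵀ)`: the Grönwall rate `‖A‖ + ‖μ b K₀ᵀ‖/δ` is large but acts
only for time `δ`, so the error at `t = δ` is of order `δ ‖A‖` plus the oscillation of `b` on
`[0, δ]`, and `Y_δ(δ) → exp (-μ b(0)K₀ᵀ)`. On `[δ, T]` both `Y_δ` and `t ↦ Y(t) exp (-μ b(0)K₀ᵀ)`
solve `X' = A X`, so their distance at `T` is at most `e^{‖A‖T}` times their distance at `δ`,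
which tends to `0` since `Y(δ) → 1`. -/

open Matrix Set Filter

/-- The `T`-periodic near-impulse function: `Δ_δ(t) = 1/δ` if `t mod T ∈ [0,δ]`
and `0` otherwise. -/
noncomputable def impulse (T δ t : ℝ) : ℝ :=
  if t - T * ⌊t / T⌋ ≤ δ then 1 / δ else 0

open NormedSpace

theorem impulse_of_mem_Ico {T δ t : ℝ} (ht : t ∈ Ico 0 T) :
    impulse T δ t = if t ≤ δ then 1 / δ else 0 := by
  have hT : 0 < T := ht.1.trans_lt ht.2
  have hfloor : ⌊t / T⌋ = 0 :=
    Int.floor_eq_zero_iff.2 ⟨div_nonneg ht.1 hT.le, (div_lt_one hT).2 ht.2⟩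
  simp [impulse, hfloor]

theorem continuous_gronwallBound (K ε : ℝ) :
    Continuous fun p : ℝ × ℝ => gronwallBound p.1 K ε p.2 := by
  unfold gronwallBound
  exact continuous_if_const _ (fun _ => by fun_prop) (fun _ => by fun_prop)

theorem gronwallBound_zero_le {K ε : ℝ} (hK : 0 ≤ K) (hε : 0 ≤ ε) (x : ℝ) :
    gronwallBound 0 K ε x ≤ ε * x * Real.exp (K * x) := by
  rcases hK.eq_or_lt with rfl | hK
  · simp [gronwallBound_K0]
  have hexp : Real.exp (K * x) - 1 ≤ K * x * Real.exp (K * x) := by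
    have h := mul_le_mul_of_nonneg_left (Real.one_sub_le_exp_neg (K * x)) (Real.exp_pos (K * x)).le
    rw [← Real.exp_add, add_neg_cancel, Real.exp_zero] at h
    linarith
  simp only [gronwallBound_of_K_ne_0 hK.ne', zero_mul, zero_add]
  calc ε / K * (Real.exp (K * x) - 1) ≤ ε / K * (K * x * Real.exp (K * x)) := by gcongr
    _ = ε * x * Real.exp (K * x) := by field_simp

theorem norm_le_gronwallBound_of_hasDerivAt_Ioo {E : Type*} [NormedAddCommGroup E]
    [NormedSpace ℝ E] {f f' : ℝ → E} {a b K ε : ℝ} (hab : a < b) (hf : ContinuousOn f (Icc a b))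
    (hf' : ∀ t ∈ Ioo a b, HasDerivAt f (f' t) t)
    (bound : ∀ t ∈ Ioo a b, ‖f' t‖ ≤ K * ‖f t‖ + ε) :
    ‖f b‖ ≤ gronwallBound ‖f a‖ K ε (b - a) := by
  have hs : ∀ s ∈ Ioo a b, ‖f b‖ ≤ gronwallBound ‖f s‖ K ε (b - s) := fun s hs =>
    norm_le_gronwallBound_of_norm_deriv_right_le (hf.mono (Icc_subset_Icc hs.1.le le_rfl))
      (fun t ht => (hf' t ⟨hs.1.trans_le ht.1, ht.2⟩).hasDerivWithinAt) le_rfl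
      (fun t ht => bound t ⟨hs.1.trans_le ht.1, ht.2⟩) b (right_mem_Icc.2 hs.2.le)
  have hcont : ContinuousWithinAt (fun s => gronwallBound ‖f s‖ K ε (b - s)) (Ioo a b) a :=
    (continuous_gronwallBound K ε).continuousAt.comp_continuousWithinAt
      (((hf a (left_mem_Icc.2 hab.le)).mono Ioo_subset_Icc_self).norm.prodMk
        (continuous_const.sub continuous_id).continuousWithinAt)
  exact ContinuousWithinAt.closure_le (f := fun _ => ‖f b‖) (x := a)
    (by rw [closure_Ioo hab.ne]; exact left_mem_Icc.2 hab.le) continuousWithinAt_const hcont hs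

section NormedAlgebra

variable {𝔸 : Type*} [NormedRing 𝔸] [NormedAlgebra ℝ 𝔸]

theorem norm_sub_le_of_hasDerivAt_mul_left {A W V : ℝ → 𝔸} {a b K : ℝ} (hab : a < b)
    (hW : ContinuousOn W (Icc a b)) (hV : ContinuousOn V (Icc a b))
    (hW' : ∀ t ∈ Ioo a b, HasDerivAt W (A t * W t) t)
    (hV' : ∀ t ∈ Ioo a b, HasDerivAt V (A t * V t) t) (hA : ∀ t ∈ Ioo a b, ‖A t‖ ≤ K) :
    ‖W b - V b‖ ≤ ‖W a - V a‖ * Real.exp (K * (b - a)) := by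
  have h := norm_le_gronwallBound_of_hasDerivAt_Ioo (f := fun t => W t - V t) (K := K) (ε := 0)
    hab (hW.sub hV)
    (fun t ht => ((hW' t ht).sub (hV' t ht)).congr_deriv (mul_sub _ _ _).symm)
    (fun t ht => by
      rw [add_zero]
      exact (norm_mul_le _ _).trans (mul_le_mul_of_nonneg_right (hA t ht) (norm_nonneg _)))
  rwa [gronwallBound_ε0] at h

variable [CompleteSpace 𝔸]

theorem norm_sub_exp_le_of_hasDerivAt_impulse {A M W : ℝ → 𝔸} {δ CA CM CZ η : ℝ} (hδ : 0 < δ)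
    (hWc : ContinuousOn W (Icc 0 δ)) (hW0 : W 0 = 1)
    (hW' : ∀ t ∈ Ioo 0 δ, HasDerivAt W ((A t + δ⁻¹ • M t) * W t) t)
    (hA : ∀ t ∈ Icc 0 δ, ‖A t‖ ≤ CA) (hM : ∀ t ∈ Icc 0 δ, ‖M t‖ ≤ CM)
    (hZ : ∀ u ∈ Icc (0 : ℝ) 1, ‖exp (u • M 0)‖ ≤ CZ)
    (hη : ∀ t ∈ Icc 0 δ, dist (M t) (M 0) ≤ η) :
    ‖W δ - exp (M 0)‖ ≤ (CA * δ + η) * CZ * Real.exp (CA * δ + CM) := by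
  have h0 : (0 : ℝ) ∈ Icc 0 δ := left_mem_Icc.2 hδ.le
  have hCA : 0 ≤ CA := (norm_nonneg _).trans (hA 0 h0)
  have hCM : 0 ≤ CM := (norm_nonneg _).trans (hM 0 h0)
  have hCZ : 0 ≤ CZ := (norm_nonneg _).trans (hZ 0 (left_mem_Icc.2 zero_le_one))
  have hη0 : 0 ≤ η := dist_nonneg.trans (hη 0 h0)
  -- Compare `W` with `Z`, which solves `Z' = δ⁻¹ M(0) Z`: no drift `A`, impulse taken at `t = 0`.
  set Z : ℝ → 𝔸 := fun t => exp (t • δ⁻¹ • M 0) with hZdef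
  have hZ' : ∀ t, HasDerivAt Z (δ⁻¹ • M 0 * Z t) t := hasDerivAt_exp_smul_const' _
  have hZb : ∀ t ∈ Icc 0 δ, ‖Z t‖ ≤ CZ := fun t ht => by
    simpa only [hZdef, smul_smul, ← div_eq_mul_inv] using
      hZ (t / δ) ⟨div_nonneg ht.1 hδ.le, (div_le_one hδ).2 ht.2⟩
  have hcoef : ∀ t ∈ Icc 0 δ, ∀ X : 𝔸, ∀ C, ‖X‖ ≤ C → ‖A t + δ⁻¹ • X‖ ≤ CA + δ⁻¹ * C :=
    fun t ht X C hX => by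
      refine (norm_add_le _ _).trans (add_le_add (hA t ht) ?_)
      rw [norm_smul, Real.norm_of_nonneg (inv_nonneg.2 hδ.le)]
      gcongr
  have hE' : ∀ t ∈ Ioo 0 δ, HasDerivAt (fun s => W s - Z s)
      ((A t + δ⁻¹ • M t) * (W t - Z t) + (A t + δ⁻¹ • (M t - M 0)) * Z t) t := fun t ht =>
    ((hW' t ht).sub (hZ' t)).congr_deriv (by
      simp only [mul_sub, add_mul, smul_sub, sub_mul, smul_mul_assoc]
      abel)
  have hEb : ∀ t ∈ Ioo 0 δ,
      ‖(A t + δ⁻¹ • M t) * (W t - Z t) + (A t + δ⁻¹ • (M t - M 0)) * Z t‖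
        ≤ (CA + δ⁻¹ * CM) * ‖W t - Z t‖ + (CA + δ⁻¹ * η) * CZ := fun t ht => by
    have ht' := Ioo_subset_Icc_self ht
    refine (norm_add_le _ _).trans (add_le_add ?_ ?_)
    · exact (norm_mul_le _ _).trans (by gcongr; exact hcoef t ht' _ _ (hM t ht'))
    · refine (norm_mul_le _ _).trans (mul_le_mul ?_ (hZb t ht') (norm_nonneg _) (by positivity))
      exact hcoef t ht' _ _ (by simpa only [dist_eq_norm] using hη t ht')
  have hgron := norm_le_gronwallBound_of_hasDerivAt_Ioo (f := fun s => W s - Z s) hδ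
    (hWc.sub fun t _ => (hZ' t).continuousAt.continuousWithinAt) hE' hEb
  simp only [hW0, hZdef, smul_smul, zero_mul, zero_smul, exp_zero, sub_self, norm_zero, sub_zero,
    mul_inv_cancel₀ hδ.ne', one_smul] at hgron
  calc ‖W δ - exp (M 0)‖ ≤ (CA + δ⁻¹ * η) * CZ * δ * Real.exp ((CA + δ⁻¹ * CM) * δ) :=
        hgron.trans (gronwallBound_zero_le (by positivity) (by positivity) δ)
    _ = (CA * δ + η) * CZ * Real.exp (CA * δ + CM) := by
        field_simp

theorem dist_le_of_hasDerivAt_impulse_then_mul_left {A M W Y : ℝ → 𝔸}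
    {δ T CA CM CZ η : ℝ} (hδ : 0 < δ) (hδT : δ < T) (hWc : ContinuousOn W (Icc 0 T))
    (hW0 : W 0 = 1) (hW_imp : ∀ t ∈ Ioo 0 δ, HasDerivAt W ((A t + δ⁻¹ • M t) * W t) t)
    (hW_free : ∀ t ∈ Ioo δ T, HasDerivAt W (A t * W t) t)
    (hY : ∀ t ∈ Icc δ T, HasDerivAt Y (A t * Y t) t)
    (hA : ∀ t ∈ Icc 0 T, ‖A t‖ ≤ CA) (hM : ∀ t ∈ Icc 0 δ, ‖M t‖ ≤ CM)
    (hZ : ∀ u ∈ Icc (0 : ℝ) 1, ‖exp (u • M 0)‖ ≤ CZ)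
    (hη : ∀ t ∈ Icc 0 δ, dist (M t) (M 0) ≤ η) :
    dist (W T) (Y T * exp (M 0))
      ≤ (CA * δ + η + dist (Y δ) 1) * CZ * Real.exp (CA * T + CM) * Real.exp (CA * T) := by
  have hT : 0 ≤ T := (hδ.trans hδT).le
  have hCA : 0 ≤ CA := (norm_nonneg _).trans (hA 0 (left_mem_Icc.2 hT))
  have hCM : 0 ≤ CM := (norm_nonneg _).trans (hM 0 (left_mem_Icc.2 hδ.le))
  have hCZ : 0 ≤ CZ := (norm_nonneg _).trans (hZ 0 (left_mem_Icc.2 zero_le_one))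
  have hη0 : 0 ≤ η := dist_nonneg.trans (hη 0 (left_mem_Icc.2 hδ.le))
  have hsub : Icc 0 δ ⊆ Icc 0 T := Icc_subset_Icc_right hδT.le
  set E := exp (M 0)
  have himp : ‖W δ - E‖ ≤ (CA * δ + η) * CZ * Real.exp (CA * δ + CM) :=
    norm_sub_exp_le_of_hasDerivAt_impulse hδ (hWc.mono hsub) hW0 hW_imp
      (fun t ht => hA t (hsub ht)) hM hZ hη
  have hfree : ‖W T - Y T * E‖ ≤ ‖W δ - Y δ * E‖ * Real.exp (CA * (T - δ)) :=
    norm_sub_le_of_hasDerivAt_mul_left (V := fun t => Y t * E) hδT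
      (hWc.mono (Icc_subset_Icc_left hδ.le))
      (fun t ht => ((hY t ht).continuousAt.mul continuousAt_const).continuousWithinAt)
      hW_free (fun t ht => by simpa only [mul_assoc] using
        (hY t (Ioo_subset_Icc_self ht)).mul_const E)
      (fun t ht => hA t ⟨hδ.le.trans ht.1.le, ht.2.le⟩)
  have hE : ‖E‖ ≤ CZ := by simpa only [one_smul] using hZ 1 (right_mem_Icc.2 zero_le_one)
  have hjump : ‖W δ - Y δ * E‖ ≤ ‖W δ - E‖ + dist (Y δ) 1 * CZ := by
    calc ‖W δ - Y δ * E‖ = ‖(W δ - E) + (1 - Y δ) * E‖ := by noncomm_ring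
      _ ≤ ‖W δ - E‖ + ‖1 - Y δ‖ * ‖E‖ :=
        (norm_add_le _ _).trans (by gcongr; exact norm_mul_le _ _)
      _ ≤ ‖W δ - E‖ + dist (Y δ) 1 * CZ := by rw [dist_comm, dist_eq_norm]; gcongr
  have hexp₂ : Real.exp (CA * (T - δ)) ≤ Real.exp (CA * T) := Real.exp_le_exp.2 (by nlinarith)
  have hone : 1 ≤ Real.exp (CA * T + CM) := Real.one_le_exp (by positivity)
  have hd : 0 ≤ dist (Y δ) 1 := dist_nonneg
  rw [dist_eq_norm]
  refine hfree.trans (mul_le_mul ?_ hexp₂ (Real.exp_pos _).le (by positivity))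
  calc ‖W δ - Y δ * E‖ ≤ (CA * δ + η) * CZ * Real.exp (CA * δ + CM) + dist (Y δ) 1 * CZ := by
        linarith
    _ ≤ (CA * δ + η) * CZ * Real.exp (CA * T + CM)
          + dist (Y δ) 1 * CZ * Real.exp (CA * T + CM) :=
        add_le_add (by gcongr) (le_mul_of_one_le_right (mul_nonneg hd hCZ) hone)
    _ = (CA * δ + η + dist (Y δ) 1) * CZ * Real.exp (CA * T + CM) := by ring

end NormedAlgebra

theorem tendsto_nhds_of_forall_eventually_dist_le {α X : Type*} [PseudoMetricSpace X]
    {l : Filter α} {f : α → X} {x : X} (C : ℝ)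
    (h : ∀ η > 0, ∀ᶠ a in l, dist (f a) x ≤ C * η) : Tendsto f l (nhds x) := by
  refine Metric.tendsto_nhds.2 fun ε hε => ?_
  have hC : 0 < |C| + 1 := by positivity
  filter_upwards [h (ε / 2 / (|C| + 1)) (by positivity)] with a ha
  calc dist (f a) x ≤ C * (ε / 2 / (|C| + 1)) := ha
    _ ≤ |C| * (ε / 2 / (|C| + 1)) := by gcongr; exact le_abs_self C
    _ < ε := by
      rw [← mul_div_assoc, div_lt_iff₀ hC]
      nlinarith [abs_nonneg C]

theorem eventually_nhdsGT_forall_Icc {P : ℝ → Prop} {a : ℝ} (h : ∀ᶠ t in nhds a, P t) :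
    ∀ᶠ δ in nhdsWithin a (Ioi a), ∀ t ∈ Icc a δ, P t := by
  obtain ⟨l, u, ⟨hl, hu⟩, hsub⟩ := mem_nhds_iff_exists_Ioo_subset.1 h
  filter_upwards [Ioo_mem_nhdsGT hu] with δ hδ t ht
  exact hsub ⟨hl.trans_le ht.1, ht.2.trans_lt hδ.2⟩

theorem hasDerivAt_matrix_iff {𝕜 m n α : Type*} [NontriviallyNormedField 𝕜] [Fintype m]
    [Fintype n] [NormedAddCommGroup α] [NormedSpace 𝕜 α] {f : 𝕜 → Matrix m n α}
    {f' : Matrix m n α} {t : 𝕜} :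
    HasDerivAt f f' t ↔ ∀ i j, HasDerivAt (fun s => f s i j) (f' i j) t :=
  hasDerivAt_pi.trans (forall_congr' fun _ => hasDerivAt_pi)

section MatrixODE

-- Only the topology of the matrix space enters the theorem; the `ℓ∞` operator norm merely makes
-- it a normed algebra, so that the lemmas above apply.
attribute [local instance] Matrix.linftyOpNormedAddCommGroup Matrix.linftyOpNormedSpace
  Matrix.linftyOpNormedRing Matrix.linftyOpNormedAlgebra

theorem tendsto_monodromy_of_impulse {n : ℕ} {T : ℝ} (hT : 0 < T)
    {A B : ℝ → Matrix (Fin n) (Fin n) ℂ} (hA : Continuous A) (hB : Continuous B) (μ : ℂ)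
    {Yd : ℝ → ℝ → Matrix (Fin n) (Fin n) ℂ}
    (hYdc : ∀ δ ∈ Ioo (0 : ℝ) T, ContinuousOn (Yd δ) (Icc 0 T))
    (hYd0 : ∀ δ ∈ Ioo (0 : ℝ) T, Yd δ 0 = 1)
    (hYd' : ∀ δ ∈ Ioo (0 : ℝ) T, ∀ t ∈ Ioo (0 : ℝ) T, t ≠ δ → ∀ i j,
      HasDerivAt (fun s => Yd δ s i j)
        (((A t - (μ * (impulse T δ t : ℝ)) • B t) * Yd δ t) i j) t)
    {Y : ℝ → Matrix (Fin n) (Fin n) ℂ} (hY0 : Y 0 = 1)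
    (hY' : ∀ t ∈ Icc (0 : ℝ) T, ∀ i j, HasDerivAt (fun s => Y s i j) ((A t * Y t) i j) t) :
    Tendsto (fun δ => Yd δ T) (nhdsWithin 0 (Ioi 0)) (nhds (Y T * exp (-μ • B 0))) := by
  set M : ℝ → Matrix (Fin n) (Fin n) ℂ := fun t => -μ • B t with hMdef
  have hM : Continuous M := hB.const_smul (-μ)
  have hY : ∀ t ∈ Icc 0 T, HasDerivAt Y (A t * Y t) t := fun t ht =>
    hasDerivAt_matrix_iff.2 (hY' t ht)
  obtain ⟨CA, hCA⟩ := (isCompact_Icc (a := 0) (b := T)).exists_bound_of_continuousOn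
    hA.continuousOn
  obtain ⟨CM, hCM⟩ := (isCompact_Icc (a := 0) (b := T)).exists_bound_of_continuousOn
    hM.continuousOn
  obtain ⟨CZ, hCZ⟩ := (isCompact_Icc (a := (0 : ℝ)) (b := 1)).exists_bound_of_continuousOn
    (continuous_iff_continuousAt.2 fun u =>
      (hasDerivAt_exp_smul_const' (𝕂 := ℝ) (M 0) u).continuousAt).continuousOn
  have hCA0 : 0 ≤ CA := (norm_nonneg _).trans (hCA 0 (left_mem_Icc.2 hT.le))
  have hCZ0 : 0 ≤ CZ := (norm_nonneg _).trans (hCZ 0 (left_mem_Icc.2 zero_le_one))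
  refine tendsto_nhds_of_forall_eventually_dist_le
    ((CA + 2) * CZ * Real.exp (CA * T + CM) * Real.exp (CA * T)) fun η hη => ?_
  have hnear : ∀ᶠ t in nhds 0, dist (M t) (M 0) ≤ η ∧ dist (Y t) 1 ≤ η ∧ t ≤ η ∧ t < T := by
    have hYc : Tendsto Y (nhds 0) (nhds 1) := hY0 ▸ (hY 0 (left_mem_Icc.2 hT.le)).continuousAt
    filter_upwards [Metric.tendsto_nhds.1 (hM.tendsto 0) η hη, Metric.tendsto_nhds.1 hYc η hη,
      eventually_le_nhds hη, eventually_lt_nhds hT] with t h₁ h₂ h₃ h₄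
    exact ⟨h₁.le, h₂.le, h₃, h₄⟩
  filter_upwards [eventually_nhdsGT_forall_Icc hnear, self_mem_nhdsWithin]
    with δ hnearδ (hδ : 0 < δ)
  obtain ⟨-, hYδ, hδη, hδT⟩ := hnearδ δ (right_mem_Icc.2 hδ.le)
  have hδI : δ ∈ Ioo 0 T := ⟨hδ, hδT⟩
  have hW' : ∀ t ∈ Ioo 0 T, t ≠ δ →
      HasDerivAt (Yd δ) ((A t - (μ * (impulse T δ t : ℝ)) • B t) * Yd δ t) t :=
    fun t ht hne => hasDerivAt_matrix_iff.2 (hYd' δ hδI t ht hne)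
  have himp : ∀ t ∈ Ioo 0 δ, HasDerivAt (Yd δ) ((A t + δ⁻¹ • M t) * Yd δ t) t := fun t ht => by
    have h := hW' t ⟨ht.1, ht.2.trans hδT⟩ ht.2.ne
    rw [impulse_of_mem_Ico ⟨ht.1.le, ht.2.trans hδT⟩, if_pos ht.2.le] at h
    convert h using 2
    simp only [hMdef, one_div, mul_comm μ, mul_smul, Complex.coe_smul, neg_smul, smul_neg,
      sub_eq_add_neg]
  have hfree : ∀ t ∈ Ioo δ T, HasDerivAt (Yd δ) (A t * Yd δ t) t := fun t ht => by
    have h := hW' t ⟨hδ.trans ht.1, ht.2⟩ ht.1.ne'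
    rwa [impulse_of_mem_Ico ⟨(hδ.trans ht.1).le, ht.2⟩, if_neg (not_le.2 ht.1),
      Complex.ofReal_zero, mul_zero, zero_smul, sub_zero] at h
  calc dist (Yd δ T) (Y T * exp (M 0))
      ≤ (CA * δ + η + dist (Y δ) 1) * CZ * Real.exp (CA * T + CM) * Real.exp (CA * T) :=
        dist_le_of_hasDerivAt_impulse_then_mul_left hδ hδT (hYdc δ hδI) (hYd0 δ hδI)
          himp hfree (fun t ht => hY t ⟨hδ.le.trans ht.1, ht.2⟩) hCA
          (fun t ht => hCM t ⟨ht.1, ht.2.trans hδT.le⟩) hCZ (fun t ht => (hnearδ t ht).1)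
    _ ≤ (CA * η + η + η) * CZ * Real.exp (CA * T + CM) * Real.exp (CA * T) := by gcongr
    _ = (CA + 2) * CZ * Real.exp (CA * T + CM) * Real.exp (CA * T) * η := by ring

end MatrixODE

theorem stmt_3_general (n : ℕ) (T : ℝ) (hT : 0 < T)
    (A : ℝ → Matrix (Fin n) (Fin n) ℝ) (b : ℝ → Fin n → ℝ)
    (hAc : Continuous A) (hbc : Continuous b)
    (K0 : Fin n → ℝ) (μ : ℂ)
    (Yd : ℝ → ℝ → Matrix (Fin n) (Fin n) ℂ)
    (hYdc : ∀ δ ∈ Ioo (0 : ℝ) T, ContinuousOn (Yd δ) (Icc 0 T))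
    (hYd0 : ∀ δ ∈ Ioo (0 : ℝ) T, Yd δ 0 = 1)
    (hYdode : ∀ δ ∈ Ioo (0 : ℝ) T, ∀ t ∈ Ioo (0 : ℝ) T, t ≠ δ → ∀ i j,
      HasDerivAt (fun s => Yd δ s i j)
        ((((A t).map (Complex.ofReal)
            - (μ * (impulse T δ t : ℝ)) •
              Matrix.vecMulVec (fun i => ((b t i : ℝ) : ℂ)) (fun j => ((K0 j : ℝ) : ℂ)))
          * Yd δ t) i j) t)
    (Y : ℝ → Matrix (Fin n) (Fin n) ℂ)
    (hY0 : Y 0 = 1)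
    (hYode : ∀ t ∈ Icc (0 : ℝ) T, ∀ i j,
      HasDerivAt (fun s => Y s i j) (((A t).map (Complex.ofReal) * Y t) i j) t)
    (P0 : Matrix (Fin n) (Fin n) ℂ) (hP0 : P0 = Y T) :
    Tendsto (fun δ => Yd δ T) (nhdsWithin 0 (Ioi (0 : ℝ)))
      (nhds (P0 * NormedSpace.exp
        (-μ • Matrix.vecMulVec (fun i => ((b 0 i : ℝ) : ℂ)) (fun j => ((K0 j : ℝ) : ℂ))))) := by
  subst hP0
  exact tendsto_monodromy_of_impulse hT (hAc.matrix_map Complex.continuous_ofReal)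
    (Continuous.matrix_vecMulVec (by fun_prop) continuous_const) μ hYdc hYd0 hYdode hY0 hYode

/-- **Impulse limit of the controlled monodromy matrix (eq. (3.8)).**
The monodromy matrix `Y_δ(T)` of `Y' = (A(t) − μ Δ_δ(t) b(t)K₀ᵀ) Y` converges to
`P₀ · exp(−μ b(0) K₀ᵀ)` as `δ → 0⁺`, where `P₀` is the uncontrolled monodromy matrix. -/
theorem stmt_3 (n : ℕ) (hn : 1 ≤ n) (T : ℝ) (hT : 0 < T)
    (A : ℝ → Matrix (Fin n) (Fin n) ℝ) (b : ℝ → Fin n → ℝ)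
    (hAc : Continuous A) (hbc : Continuous b)
    (hAp : Function.Periodic A T) (hbp : Function.Periodic b T)
    (K0 : Fin n → ℝ) (μ : ℂ)
    (Yd : ℝ → ℝ → Matrix (Fin n) (Fin n) ℂ)
    (hYdc : ∀ δ ∈ Ioo (0 : ℝ) T, ContinuousOn (Yd δ) (Icc 0 T))
    (hYd0 : ∀ δ ∈ Ioo (0 : ℝ) T, Yd δ 0 = 1)
    (hYdode : ∀ δ ∈ Ioo (0 : ℝ) T, ∀ t ∈ Ioo (0 : ℝ) T, t ≠ δ → ∀ i j,
      HasDerivAt (fun s => Yd δ s i j)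
        ((((A t).map (Complex.ofReal)
            - (μ * (impulse T δ t : ℝ)) •
              Matrix.vecMulVec (fun i => ((b t i : ℝ) : ℂ)) (fun j => ((K0 j : ℝ) : ℂ)))
          * Yd δ t) i j) t)
    (Y : ℝ → Matrix (Fin n) (Fin n) ℂ)
    (hY0 : Y 0 = 1)
    (hYode : ∀ t ∈ Icc (0 : ℝ) T, ∀ i j,
      HasDerivAt (fun s => Y s i j) (((A t).map (Complex.ofReal) * Y t) i j) t)
    (P0 : Matrix (Fin n) (Fin n) ℂ) (hP0 : P0 = Y T) :
    Tendsto (fun δ => Yd δ T) (nhdsWithin 0 (Ioi (0 : ℝ)))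
      (nhds (P0 * NormedSpace.exp
        (-μ • Matrix.vecMulVec (fun i => ((b 0 i : ℝ) : ℂ)) (fun j => ((K0 j : ℝ) : ℂ))))) :=
  stmt_3_general n T hT A b hAc hbc K0 μ Yd hYdc hYd0 hYdode Y hY0 hYode P0 hP0
end

section
/- Let n ≥ 1, let M be an n×n complex matrix and v, w ∈ ℂⁿ with wᵀv ≠ 0, and let vwᵀ denote the rank-one matrix with entries vᵢwⱼ. Assume det(I − M) = 0 and det(I − M·exp(−vwᵀ)) ≠ 0. Then for κ ∈ ℂ: det(I − M·exp((κ−1)·vwᵀ)) = 0 if and only if κ = 1 + 2πiℓ/(wᵀv) for some integer ℓ. -/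
/-!
With `A = v wᵀ` and `c = wᵀv` one has `A² = c A`, so `c⁻¹ A` is idempotent and
`exp (s A) = I + ((e^{sc} - 1) / c) A`. Hence `I - M exp (s A)` is the rank-one perturbation
`(I - M) - φ(s) (M v) wᵀ`, whose determinant is affine in `φ(s)`. As `det (I - M) = 0`, it equals
`(e^{sc} - 1) β` for a constant `β`, and `β ≠ 0` by the assumption at `s = -1`; so the zeros are
exactly the `κ` with `e^{(κ - 1) c} = 1`.
-/

open Matrix Real

section Exponential

variable {𝕂 𝔸 : Type*} [RCLike 𝕂] [Ring 𝔸] [Algebra 𝕂 𝔸] [TopologicalSpace 𝔸]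
  [IsTopologicalRing 𝔸] [ContinuousSMul 𝕂 𝔸] [T2Space 𝔸]

theorem NormedSpace.exp_smul_of_isIdempotentElem {e : 𝔸} (he : IsIdempotentElem e) (t : 𝕂) :
    exp (t • e) = exp t • e + (1 - e) := by
  have hterm : ∀ k : ℕ, (k.factorial⁻¹ : 𝕂) • (t • e) ^ k
      = ((k.factorial⁻¹ : 𝕂) • t ^ k) • e + (if k = 0 then 1 - e else 0) := by
    rintro (_ | k)
    · simp
    · rw [smul_pow, he.pow_succ_eq, if_neg k.succ_ne_zero, add_zero, smul_smul, smul_eq_mul]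
  rw [congrFun (exp_eq_tsum 𝕂) (t • e), tsum_congr hterm]
  exact (((exp_series_hasSum_exp' t).smul_const e).add (hasSum_ite_eq 0 (1 - e))).tsum_eq

theorem NormedSpace.exp_smul_of_mul_self_eq_smul {a : 𝔸} {c : 𝕂} (hc : c ≠ 0)
    (ha : a * a = c • a) (z : 𝕂) :
    exp (z • a) = 1 + ((exp (z * c) - 1) / c) • a := by
  have he : IsIdempotentElem (c⁻¹ • a) := by
    rw [IsIdempotentElem, smul_mul_smul_comm, ha, smul_smul, mul_assoc, inv_mul_cancel₀ hc, mul_one]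
  have hza : z • a = (z * c) • (c⁻¹ • a) := by
    rw [smul_smul, mul_assoc, mul_inv_cancel₀ hc, mul_one]
  rw [hza, exp_smul_of_isIdempotentElem he, smul_smul, div_eq_mul_inv, sub_mul, sub_smul, one_mul]
  abel

end Exponential

theorem Matrix.exists_det_add_smul_vecMulVec {m R : Type*} [Fintype m] [DecidableEq m]
    [CommRing R] (A : Matrix m m R) (u v : m → R) :
    ∃ α : R, ∀ t : R, det (A + t • vecMulVec u v) = det A + t * α := by
  let G₀ : Matrix (m ⊕ Unit) (m ⊕ Unit) R := fromBlocks A 0 (replicateRow Unit (-v)) 1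
  let j : m ⊕ Unit := Sum.inr ()
  let x : m ⊕ Unit → R := Sum.elim u 0
  let y : m ⊕ Unit → R := Sum.elim 0 1
  refine ⟨det (updateCol G₀ j x), fun t => ?_⟩
  -- Schur complement: `det (A + t u vᵀ)` is the determinant of the bordered matrix
  -- `[[A, t u], [-vᵀ, 1]]`, which is affine in its last column.
  have hblock : A + t • vecMulVec u v
      = A - replicateCol Unit (t • u) * replicateRow Unit (-v) := by
    rw [← vecMulVec_eq, vecMulVec_neg, ← smul_vecMulVec, sub_neg_eq_add]
  have hcol : fromBlocks A (replicateCol Unit (t • u)) (replicateRow Unit (-v)) 1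
      = updateCol G₀ j (t • x + y) := by
    ext (i | i) (k | k) <;> simp [G₀, j, x, y]
  have hG₀ : updateCol G₀ j y = G₀ := by
    have hy : y = fun i => G₀ i j := by ext (i | i) <;> simp [G₀, j, y]
    rw [hy, updateCol_eq_self]
  rw [hblock, ← det_fromBlocks_one₂₂, hcol, det_updateCol_add, det_updateCol_smul, hG₀,
    det_fromBlocks_zero₁₂, det_one, mul_one, add_comm]

theorem Matrix.exp_smul_vecMulVec {m 𝕂 : Type*} [Fintype m] [DecidableEq m] [RCLike 𝕂]
    {v w : m → 𝕂} (hwv : w ⬝ᵥ v ≠ 0) (z : 𝕂) :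
    NormedSpace.exp (z • vecMulVec v w)
      = 1 + ((NormedSpace.exp (z * (w ⬝ᵥ v)) - 1) / (w ⬝ᵥ v)) • vecMulVec v w :=
  NormedSpace.exp_smul_of_mul_self_eq_smul hwv
    (by rw [vecMulVec_mul_vecMulVec, vecMulVec_smul]) z

theorem Matrix.exists_det_one_sub_mul_exp_smul_vecMulVec {m : Type*} [Fintype m] [DecidableEq m]
    {M : Matrix m m ℂ} {v w : m → ℂ} (hwv : w ⬝ᵥ v ≠ 0) (htriv : det (1 - M) = 0) :
    ∃ β : ℂ, ∀ s : ℂ,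
      det (1 - M * NormedSpace.exp (s • vecMulVec v w)) = (Complex.exp (s * (w ⬝ᵥ v)) - 1) * β := by
  obtain ⟨α, hα⟩ := exists_det_add_smul_vecMulVec (1 - M) (M *ᵥ v) w
  refine ⟨-α / (w ⬝ᵥ v), fun s => ?_⟩
  set φ := (Complex.exp (s * (w ⬝ᵥ v)) - 1) / (w ⬝ᵥ v)
  have hsplit : 1 - M * (1 + φ • vecMulVec v w) = (1 - M) + (-φ) • vecMulVec (M *ᵥ v) w := by
    rw [Matrix.mul_add, Matrix.mul_one, mul_smul_comm, mul_vecMulVec, neg_smul]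
    abel
  rw [exp_smul_vecMulVec hwv, ← Complex.exp_eq_exp_ℂ, hsplit, hα, htriv]
  ring

theorem stmt_9_general (n : ℕ) (M : Matrix (Fin n) (Fin n) ℂ) (v w : Fin n → ℂ)
    (hwv : w ⬝ᵥ v ≠ 0)
    (htriv : Matrix.det (1 - M) = 0)
    (hreg : Matrix.det (1 - M * NormedSpace.exp (-(Matrix.vecMulVec v w))) ≠ 0) :
    ∀ κ : ℂ,
      Matrix.det (1 - M * NormedSpace.exp ((κ - 1) • Matrix.vecMulVec v w)) = 0 ↔
      ∃ ℓ : ℤ, κ = 1 + 2 * (π : ℂ) * Complex.I * (ℓ : ℂ) / (w ⬝ᵥ v) := by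
  intro κ
  obtain ⟨β, hβ⟩ := exists_det_one_sub_mul_exp_smul_vecMulVec hwv htriv
  have hβ0 : β ≠ 0 := by
    rintro rfl
    apply hreg
    rw [← neg_one_smul ℂ, hβ, mul_zero]
  rw [hβ, mul_eq_zero, or_iff_left hβ0, sub_eq_zero, Complex.exp_eq_one_iff]
  refine exists_congr fun ℓ => ?_
  rw [add_div' _ _ _ hwv, eq_div_iff hwv]
  constructor <;> intro h <;> linear_combination h

/-- **Roots of the reduced characteristic function (eq. (3.14)).**
If `wᵀv ≠ 0`, `det(I − M) = 0` and `det(I − M exp(−v wᵀ)) ≠ 0`, then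
`det(I − M exp((κ−1) v wᵀ)) = 0` iff `κ = 1 + 2πiℓ/(wᵀv)` for some integer `ℓ`. -/
theorem stmt_9 (n : ℕ) (hn : 1 ≤ n) (M : Matrix (Fin n) (Fin n) ℂ) (v w : Fin n → ℂ)
    (hwv : w ⬝ᵥ v ≠ 0)
    (htriv : Matrix.det (1 - M) = 0)
    (hreg : Matrix.det (1 - M * NormedSpace.exp (-(Matrix.vecMulVec v w))) ≠ 0) :
    ∀ κ : ℂ,
      Matrix.det (1 - M * NormedSpace.exp ((κ - 1) • Matrix.vecMulVec v w)) = 0 ↔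
      ∃ ℓ : ℤ, κ = 1 + 2 * (π : ℂ) * Complex.I * (ℓ : ℂ) / (w ⬝ᵥ v) :=
  stmt_9_general n M v w hwv htriv hreg
end

section
/- Let p < 0 be real, r = √(−p), x₁(t) = r·sin t, x₂(t) = −r·cos t, and define A(t) ∈ ℝ^{2×2} by A(t) = [[p + 3x₁(t)² + x₂(t)², −1 + 2x₁(t)x₂(t)], [1 + 2x₁(t)x₂(t), p + x₁(t)² + 3x₂(t)²]]. If Y : ℝ → ℝ^{2×2} satisfies Y(0) = I and Y′(t) = A(t)·Y(t) for all t, then Y(2π) = [[1, 0], [0, exp(−4πp)]]. -/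
/-!
Using `r² = -p`, the Jacobian along the orbit becomes
`[[-2p sin²t, -1 + 2p sin t cos t], [1 + 2p sin t cos t, -2p cos²t]]`, and
`Z(t) = R(t) · diag(1, e^{-2pt})`, with `R(t)` the rotation by `t`, solves `Z' = A Z`, `Z(0) = I`.
The equation is linear with continuous coefficients, so its solutions are unique (Grönwall) and
`Y(2π) = Z(2π) = diag(1, e^{-4πp})`.
-/

open Real Matrix Set

theorem ODE_solution_unique_of_continuousOn_linear {E : Type*} [NormedAddCommGroup E]
    [NormedSpace ℝ E] {L : ℝ → E →L[ℝ] E} {f g : ℝ → E} {a b : ℝ}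
    (hL : ContinuousOn L (Icc a b))
    (hf : ContinuousOn f (Icc a b)) (hf' : ∀ t ∈ Ico a b, HasDerivWithinAt f (L t (f t)) (Ici t) t)
    (hg : ContinuousOn g (Icc a b)) (hg' : ∀ t ∈ Ico a b, HasDerivWithinAt g (L t (g t)) (Ici t) t)
    (ha : f a = g a) : EqOn f g (Icc a b) := by
  obtain ⟨C, hC⟩ := isCompact_Icc.exists_bound_of_continuousOn hL
  have hLip : ∀ t ∈ Ico a b, LipschitzOnWith C.toNNReal (L t) univ := fun t ht =>
    ((L t).lipschitz.weaken
      (NNReal.le_toNNReal_of_coe_le (hC t (Ico_subset_Icc_self ht)))).lipschitzOnWith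
  exact ODE_solution_unique_of_mem_Icc_right hLip hf hf' (fun _ _ => trivial) hg hg'
    (fun _ _ => trivial) ha

namespace Matrix

attribute [local instance] Matrix.normedAddCommGroup Matrix.normedSpace

theorem hasDerivAt_iff {l m : Type*} [Fintype m] {Y : ℝ → Matrix l m ℝ} {Y' : Matrix l m ℝ}
    {t : ℝ} :
    HasDerivAt Y Y' t ↔ ∀ i j, HasDerivAt (fun s => Y s i j) (Y' i j) t :=
  (hasDerivAt_pi (φ := (Y : ℝ → l → m → ℝ))).trans (forall_congr' fun _ => hasDerivAt_pi)

theorem eqOn_Icc_of_hasDerivAt_mul_left {l m : Type*} [Fintype l] [Fintype m]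
    {A : ℝ → Matrix l l ℝ} {Y Z : ℝ → Matrix l m ℝ} {a b : ℝ}
    (hA : ContinuousOn A (Icc a b))
    (hY : ∀ t i j, HasDerivAt (fun s => Y s i j) ((A t * Y t) i j) t)
    (hZ : ∀ t i j, HasDerivAt (fun s => Z s i j) ((A t * Z t) i j) t)
    (h0 : Y a = Z a) : EqOn Y Z (Icc a b) := by
  let Φ : Matrix l l ℝ →ₗ[ℝ] Matrix l m ℝ →L[ℝ] Matrix l m ℝ :=
    LinearMap.toContinuousLinearMap.toLinearMap ∘ₗ mulLinearMap ℝ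
  have hY' : ∀ t, HasDerivAt Y (Φ (A t) (Y t)) t := fun t => hasDerivAt_iff.2 (hY t)
  have hZ' : ∀ t, HasDerivAt Z (Φ (A t) (Z t)) t := fun t => hasDerivAt_iff.2 (hZ t)
  exact ODE_solution_unique_of_continuousOn_linear
    (Φ.continuous_of_finiteDimensional.comp_continuousOn hA)
    (continuous_iff_continuousAt.2 fun t => (hY' t).continuousAt).continuousOn
    (fun t _ => (hY' t).hasDerivWithinAt)
    (continuous_iff_continuousAt.2 fun t => (hZ' t).continuousAt).continuousOn
    (fun t _ => (hZ' t).hasDerivWithinAt) h0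

end Matrix

noncomputable section

def hopfJacobianOnOrbit (p t : ℝ) : Matrix (Fin 2) (Fin 2) ℝ :=
  !![-2 * p * sin t ^ 2, -1 + 2 * p * sin t * cos t;
    1 + 2 * p * sin t * cos t, -2 * p * cos t ^ 2]

def hopfFundamentalMatrix (p t : ℝ) : Matrix (Fin 2) (Fin 2) ℝ :=
  !![cos t, -sin t * exp (-2 * p * t); sin t, cos t * exp (-2 * p * t)]

end

theorem hopfJacobianOnOrbit_eq {p r : ℝ} (hr : r ^ 2 = -p) (t : ℝ) :
    !![p + 3 * (r * sin t) ^ 2 + (-r * cos t) ^ 2, -1 + 2 * (r * sin t) * (-r * cos t);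
      1 + 2 * (r * sin t) * (-r * cos t), p + (r * sin t) ^ 2 + 3 * (-r * cos t) ^ 2] =
      hopfJacobianOnOrbit p t := by
  have hpyth := sin_sq_add_cos_sq t
  have h00 : p + 3 * (r * sin t) ^ 2 + (-r * cos t) ^ 2 = -2 * p * sin t ^ 2 := by
    linear_combination (3 * sin t ^ 2 + cos t ^ 2) * hr - p * hpyth
  have hoff : 2 * (r * sin t) * (-r * cos t) = 2 * p * sin t * cos t := by
    linear_combination (-2 * sin t * cos t) * hr
  have h11 : p + (r * sin t) ^ 2 + 3 * (-r * cos t) ^ 2 = -2 * p * cos t ^ 2 := by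
    linear_combination (sin t ^ 2 + 3 * cos t ^ 2) * hr - p * hpyth
  rw [h00, hoff, h11, hopfJacobianOnOrbit]

theorem continuous_hopfJacobianOnOrbit (p : ℝ) : Continuous (hopfJacobianOnOrbit p) := by
  unfold hopfJacobianOnOrbit; fun_prop

theorem hopfFundamentalMatrix_zero (p : ℝ) : hopfFundamentalMatrix p 0 = 1 := by
  simp [hopfFundamentalMatrix, one_fin_two]

theorem hopfFundamentalMatrix_two_pi (p : ℝ) :
    hopfFundamentalMatrix p (2 * π) = !![1, 0; 0, exp (-4 * π * p)] := by
  have : 2 * p * (2 * π) = 4 * π * p := by ring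
  simp [hopfFundamentalMatrix, this]

theorem hasDerivAt_hopfFundamentalMatrix_apply (p t : ℝ) (i j : Fin 2) :
    HasDerivAt (fun s => hopfFundamentalMatrix p s i j)
      ((hopfJacobianOnOrbit p t * hopfFundamentalMatrix p t) i j) t := by
  have hpyth := sin_sq_add_cos_sq t
  have hexp : HasDerivAt (fun s => exp (-2 * p * s)) (exp (-2 * p * t) * (-2 * p)) t :=
    ((hasDerivAt_id' t).const_mul (-2 * p)).exp.congr_deriv (by ring)
  fin_cases i <;> fin_cases j <;>
    simp only [hopfFundamentalMatrix, hopfJacobianOnOrbit, mul_apply, Fin.sum_univ_two, of_apply,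
      cons_val', cons_val_zero, cons_val_one, cons_val_fin_one, Fin.zero_eta, Fin.mk_one]
  · exact (hasDerivAt_cos t).congr_deriv (by ring)
  · exact ((hasDerivAt_sin t).fun_neg.mul hexp).congr_deriv
      (by linear_combination (-2 * p * sin t * exp (-2 * p * t)) * hpyth)
  · exact (hasDerivAt_sin t).congr_deriv (by ring)
  · exact ((hasDerivAt_cos t).mul hexp).congr_deriv
      (by linear_combination (2 * p * cos t * exp (-2 * p * t)) * hpyth)

/-- **Monodromy matrix of the Hopf normal form orbit (Section 5).**
The fundamental solution of the variational equation `Y' = A(t) Y` along the Hopf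
periodic orbit `x_*(t) = (r sin t, −r cos t)`, `r = √(−p)`, satisfies
`Y(2π) = diag(1, e^{−4πp})`. -/
theorem stmt_12 (p : ℝ) (hp : p < 0) (r : ℝ) (hr : r = Real.sqrt (-p))
    (x1 x2 : ℝ → ℝ) (hx1 : ∀ t, x1 t = r * Real.sin t)
    (hx2 : ∀ t, x2 t = -r * Real.cos t)
    (A : ℝ → Matrix (Fin 2) (Fin 2) ℝ)
    (hA : ∀ t, A t = !![p + 3 * x1 t ^ 2 + x2 t ^ 2, -1 + 2 * x1 t * x2 t;
                       1 + 2 * x1 t * x2 t, p + x1 t ^ 2 + 3 * x2 t ^ 2])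
    (Y : ℝ → Matrix (Fin 2) (Fin 2) ℝ)
    (hY0 : Y 0 = 1)
    (hYode : ∀ t, ∀ i j, HasDerivAt (fun s => Y s i j) ((A t * Y t) i j) t) :
    Y (2 * π) = !![1, 0; 0, Real.exp (-4 * π * p)] := by
  have hr2 : r ^ 2 = -p := by rw [hr, sq_sqrt (neg_nonneg.2 hp.le)]
  have hJ : A = hopfJacobianOnOrbit p := funext fun t => by
    rw [hA, hx1, hx2, hopfJacobianOnOrbit_eq hr2]
  subst hJ
  have hY : EqOn Y (hopfFundamentalMatrix p) (Icc 0 (2 * π)) :=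
    eqOn_Icc_of_hasDerivAt_mul_left (continuous_hopfJacobianOnOrbit p).continuousOn hYode
      (hasDerivAt_hopfFundamentalMatrix_apply p) (hY0.trans (hopfFundamentalMatrix_zero p).symm)
  rw [hY ⟨by positivity, le_rfl⟩, hopfFundamentalMatrix_two_pi]
end

section
/- Let p < 0 and K₁, K₂ ∈ ℝ with K₁ + K₂ ≤ 0. Let r = √(−p), x₁(t) = r·sin t, x₂(t) = −r·cos t, A(t) = [[p + 3x₁(t)² + x₂(t)², −1 + 2x₁(t)x₂(t)], [1 + 2x₁(t)x₂(t), p + x₁(t)² + 3x₂(t)²]], b = (1,1) ∈ ℝ², K = (K₁,K₂) ∈ ℝ², and let bKᵀ be the 2×2 matrix with entries bᵢKⱼ. If Y : ℝ → ℝ^{2×2} satisfies Y(0) = I and Y′(t) = (A(t) − bKᵀ)·Y(t) for all t, then det Y(2π) = exp(2π·(−2p − K₁ − K₂)) > 1, and consequently there exists λ ∈ ℂ with |λ| > 1 and det(λ·I − Y(2π)) = 0 (Y(2π) viewed as a complex matrix). -/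
/-!
On the orbit `x₁² + x₂² = r² = -p`, so the trace of `A(t) - b Kᵀ` is the constant
`c = -2p - K₁ - K₂ > 0`. By Liouville's formula `(det Y)' = tr(A - b Kᵀ) · det Y`, hence
`det Y(2π) = e^{2πc} > 1`. Since `det Y(2π)` is the product of the (complex) eigenvalues of
`Y(2π)`, not all of them can lie in the closed unit disc.
-/

open Real Matrix

theorem Multiset.norm_prod_le_one {α : Type*} [NormedCommRing α] [NormMulClass α]
    [NormOneClass α] (s : Multiset α) (h : ∀ x ∈ s, ‖x‖ ≤ 1) : ‖s.prod‖ ≤ 1 := by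
  induction s using Multiset.induction_on with
  | empty => simp
  | cons a s ih =>
    rw [Multiset.prod_cons, norm_mul]
    exact mul_le_one₀ (h a (s.mem_cons_self a)) (norm_nonneg _)
      (ih fun x hx => h x (Multiset.mem_cons_of_mem hx))

theorem Matrix.exists_one_lt_norm_det_smul_one_sub_eq_zero {n : Type*} [Fintype n]
    [DecidableEq n] (M : Matrix n n ℂ) (hM : 1 < ‖M.det‖) :
    ∃ lam : ℂ, 1 < ‖lam‖ ∧ (lam • (1 : Matrix n n ℂ) - M).det = 0 := by
  by_contra! h
  have hroots : ∀ lam ∈ M.charpoly.roots, ‖lam‖ ≤ 1 := fun lam hlam => by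
    refine not_lt.1 fun hlt => h lam hlt ?_
    have := (Polynomial.mem_roots M.charpoly_monic.ne_zero).1 hlam
    rwa [Polynomial.IsRoot, eval_charpoly, scalar_apply, ← smul_one_eq_diagonal] at this
  rw [det_eq_prod_roots_charpoly] at hM
  exact hM.not_ge (Multiset.norm_prod_le_one _ hroots)

theorem hasDerivAt_det_fin_two {Y M : ℝ → Matrix (Fin 2) (Fin 2) ℝ} {t : ℝ}
    (hY : ∀ i j, HasDerivAt (fun s => Y s i j) ((M t * Y t) i j) t) :
    HasDerivAt (fun s => (Y s).det) ((M t).trace * (Y t).det) t := by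
  simp only [det_fin_two]
  refine (((hY 0 0).mul (hY 1 1)).sub ((hY 0 1).mul (hY 1 0))).congr_deriv ?_
  simp only [mul_apply, Fin.sum_univ_two, trace_fin_two]
  ring

theorem eq_mul_exp_of_hasDerivAt_const_mul {f : ℝ → ℝ} {c : ℝ}
    (hf : ∀ t, HasDerivAt f (c * f t) t) (t : ℝ) : f t = f 0 * exp (c * t) := by
  have hconst : ∀ s, HasDerivAt (fun u => f u * exp (-c * u)) 0 s := fun s =>
    ((hf s).mul ((hasDerivAt_id s).const_mul (-c)).exp).congr_deriv (by simp; ring)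
  have := is_const_of_deriv_eq_zero (fun u => (hconst u).differentiableAt)
    (fun u => (hconst u).deriv) t 0
  rw [mul_zero, exp_zero, mul_one] at this
  rw [← this, mul_assoc, ← exp_add]
  simp

/-- **Classical constant-gain feedback fails for the Hopf orbit (proof of Lemma 5.1).**
For constant gains with `K₁ + K₂ ≤ 0`, the monodromy matrix `Y(2π)` of the classically
feedback-controlled linearisation `Y' = (A(t) − b Kᵀ) Y` along the Hopf orbit has
determinant `e^{2π(−2p − K₁ − K₂)} > 1`, hence an eigenvalue of modulus `> 1`. -/
theorem stmt_13 (p : ℝ) (hp : p < 0) (K1 K2 : ℝ) (hK : K1 + K2 ≤ 0)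
    (r : ℝ) (hr : r = Real.sqrt (-p))
    (x1 x2 : ℝ → ℝ) (hx1 : ∀ t, x1 t = r * Real.sin t)
    (hx2 : ∀ t, x2 t = -r * Real.cos t)
    (A : ℝ → Matrix (Fin 2) (Fin 2) ℝ)
    (hA : ∀ t, A t = !![p + 3 * x1 t ^ 2 + x2 t ^ 2, -1 + 2 * x1 t * x2 t;
                       1 + 2 * x1 t * x2 t, p + x1 t ^ 2 + 3 * x2 t ^ 2])
    (b K : Fin 2 → ℝ) (hb : b = ![1, 1]) (hKdef : K = ![K1, K2])
    (Y : ℝ → Matrix (Fin 2) (Fin 2) ℝ)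
    (hY0 : Y 0 = 1)
    (hYode : ∀ t, ∀ i j,
      HasDerivAt (fun s => Y s i j) (((A t - Matrix.vecMulVec b K) * Y t) i j) t) :
    Matrix.det (Y (2 * π)) = Real.exp (2 * π * (-2 * p - K1 - K2)) ∧
    1 < Real.exp (2 * π * (-2 * p - K1 - K2)) ∧
    ∃ lam : ℂ, 1 < ‖lam‖ ∧
      Matrix.det (lam • (1 : Matrix (Fin 2) (Fin 2) ℂ)
        - (Y (2 * π)).map (Complex.ofReal)) = 0 := by
  have horbit : ∀ t, x1 t ^ 2 + x2 t ^ 2 = -p := fun t => by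
    rw [hx1, hx2, ← sq_sqrt (neg_nonneg.2 hp.le), ← hr]
    linear_combination r ^ 2 * sin_sq_add_cos_sq t
  have htrace : ∀ t, (A t - vecMulVec b K).trace = -2 * p - K1 - K2 := fun t => by
    rw [trace_fin_two, Matrix.sub_apply, Matrix.sub_apply, vecMulVec_apply, vecMulVec_apply,
      hA, hb, hKdef]
    simp only [of_apply, cons_val', cons_val_zero, cons_val_one, cons_val_fin_one, one_mul]
    linear_combination 4 * horbit t
  have hliouville : ∀ t, HasDerivAt (fun s => (Y s).det)
      ((-2 * p - K1 - K2) * (Y t).det) t := fun t => by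
    rw [← htrace t]
    exact hasDerivAt_det_fin_two (M := fun s => A s - vecMulVec b K) (hYode t)
  have hdet : (Y (2 * π)).det = exp (2 * π * (-2 * p - K1 - K2)) := by
    rw [eq_mul_exp_of_hasDerivAt_const_mul hliouville, hY0, det_one, one_mul, mul_comm]
  have hgt : 1 < exp (2 * π * (-2 * p - K1 - K2)) :=
    one_lt_exp_iff.2 (mul_pos two_pi_pos (by linarith))
  refine ⟨hdet, hgt, exists_one_lt_norm_det_smul_one_sub_eq_zero _ ?_⟩
  have hdet_map : ((Y (2 * π)).map Complex.ofReal).det = (Y (2 * π)).det :=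
    (Complex.ofRealHom.map_det _).symm
  rwa [hdet_map, Complex.norm_real, norm_eq_abs, hdet, abs_of_pos (exp_pos _)]
end

section
/- Let n ≥ 1, let b : ℝ → ℝⁿ be continuous, K₀ ∈ ℝⁿ and μ ∈ ℂ. For δ > 0 let Z_δ : [0,δ] → ℂ^{n×n} satisfy Z_δ(0) = I and Z_δ′(t) = −(μ/δ)·b(t)K₀ᵀ·Z_δ(t) for all t ∈ [0,δ] (real entries viewed as complex). Then Z_δ(δ) converges to exp(−μ·b(0)K₀ᵀ) as δ → 0⁺, where exp is the matrix exponential. -/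
/-!
If `Z' = a b(t) K₀ᵀ Z`, the row vector `K₀ᵀ Z` satisfies the scalar equation
`w' = a (K₀ ⬝ b(t)) w`, so it is an explicit exponential, and then `Z' = a b(t) (K₀ᵀ Z)` integrates
to a closed formula `Z(T) = 1 + ∫₀ᵀ a e^{a C(t)} b(t) K₀ᵀ dt`, `C(t) = ∫₀ᵗ K₀ ⬝ b`.
Rescaling time by `δ` turns the pulse system on `[0, δ]` into the system with coefficients
`-μ b(δ s) K₀ᵀ` on `[0, 1]`, whose closed formula depends continuously on `δ ∈ ℝ`, including
`δ = 0`. At `δ = 0` the coefficients are constant, and the same formula is satisfied by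
`s ↦ exp(-s μ b(0) K₀ᵀ)`, which identifies the limit with the matrix exponential.
-/

open Set Matrix Filter

theorem eq_exp_sub_mul_of_hasDerivAt {u C c : ℝ → ℂ} {T : ℝ}
    (hC : ∀ t ∈ Icc 0 T, HasDerivAt C (c t) t)
    (hu : ∀ t ∈ Icc 0 T, HasDerivAt u (c t * u t) t) :
    ∀ t ∈ Icc 0 T, u t = Complex.exp (C t - C 0) * u 0 := by
  have hconst : ∀ t ∈ Icc 0 T, HasDerivAt (fun s => Complex.exp (-C s) * u s) 0 t := by
    intro t ht
    exact (((hC t ht).fun_neg.cexp).fun_mul (hu t ht)).congr_deriv (by ring)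
  intro t ht
  have h := constant_of_has_deriv_right_zero
    (fun s hs => (hconst s hs).continuousAt.continuousWithinAt)
    (fun s hs => (hconst s (Ico_subset_Icc_self hs)).hasDerivWithinAt) t ht
  rw [sub_eq_add_neg, Complex.exp_add, mul_assoc, ← h, ← mul_assoc, ← Complex.exp_add,
    add_neg_cancel, Complex.exp_zero, one_mul]

section RankOne

variable {m : Type*} [Fintype m]

theorem smul_vecMulVec_mul_apply (a : ℂ) (v κ : m → ℂ) (Z : Matrix m m ℂ) (i j : m) :
    ((a • vecMulVec v κ) * Z) i j = a * v i * vecMul κ Z j := by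
  simp only [mul_apply, Matrix.smul_apply, vecMulVec_apply, vecMul, dotProduct, smul_eq_mul,
    Finset.mul_sum]
  exact Finset.sum_congr rfl fun k _ => by ring

variable [DecidableEq m]

/-- The value at time `T` of the solution of `Y' = a β(t) κᵀ Y`, `Y 0 = 1`. -/
noncomputable def rankOneFlow (a : ℂ) (β : ℝ → m → ℂ) (κ : m → ℂ) (T : ℝ) : Matrix m m ℂ :=
  1 + Matrix.of fun i j => ∫ t in 0..T, a * Complex.exp (a * ∫ r in 0..t, κ ⬝ᵥ β r) * β t i * κ j

theorem eq_rankOneFlow_of_hasDerivAt {a : ℂ} {β : ℝ → m → ℂ} {κ : m → ℂ} {T : ℝ}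
    {Z : ℝ → Matrix m m ℂ} (hβ : Continuous β) (hT : 0 ≤ T) (hZ0 : Z 0 = 1)
    (hZ : ∀ t ∈ Icc 0 T, ∀ i j,
      HasDerivAt (fun s => Z s i j) (((a • vecMulVec (β t) κ) * Z t) i j) t) :
    Z T = rankOneFlow a β κ T := by
  set C : ℝ → ℂ := fun t => a * ∫ r in 0..t, κ ⬝ᵥ β r
  have hc : Continuous fun r => κ ⬝ᵥ β r := by fun_prop
  have hC : ∀ t, HasDerivAt C (a * (κ ⬝ᵥ β t)) t := fun t =>
    ((hc.integral_hasStrictDerivAt 0 t).hasDerivAt).const_mul a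
  have hC0 : C 0 = 0 := mul_eq_zero_of_right a intervalIntegral.integral_same
  have hrow : ∀ j, ∀ t ∈ Icc 0 T, vecMul κ (Z t) j = Complex.exp (C t) * κ j := by
    intro j
    have hw : ∀ t ∈ Icc 0 T,
        HasDerivAt (fun s => vecMul κ (Z s) j) (a * (κ ⬝ᵥ β t) * vecMul κ (Z t) j) t := by
      intro t ht
      refine (HasDerivAt.fun_sum fun k _ => (hZ t ht k j).const_mul (κ k)).congr_deriv ?_
      simp only [smul_vecMulVec_mul_apply, dotProduct, Finset.mul_sum, Finset.sum_mul]
      exact Finset.sum_congr rfl fun k _ => by ring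
    intro t ht
    rw [eq_exp_sub_mul_of_hasDerivAt (fun t _ => hC t) hw t ht, hZ0, vecMul_one, hC0, sub_zero]
  ext i j
  have hentry : ∀ t ∈ uIcc 0 T, HasDerivAt (fun s => Z s i j)
      (a * Complex.exp (C t) * β t i * κ j) t := by
    intro t ht
    rw [uIcc_of_le hT] at ht
    convert hZ t ht i j using 1
    rw [smul_vecMulVec_mul_apply, hrow j t ht]
    ring
  have hcont : Continuous fun t => a * Complex.exp (C t) * β t i * κ j := by
    have : Continuous C := continuous_iff_continuousAt.2 fun t => (hC t).continuousAt
    fun_prop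
  simp only [rankOneFlow, Matrix.add_apply, of_apply]
  rw [intervalIntegral.integral_eq_sub_of_hasDerivAt hentry (hcont.intervalIntegrable 0 T), hZ0]
  ring

theorem continuous_rankOneFlow (a : ℂ) {β : ℝ → ℝ → m → ℂ} (hβ : Continuous (Function.uncurry β))
    (κ : m → ℂ) (T : ℝ) : Continuous fun δ => rankOneFlow a (β δ) κ T := by
  have hC : Continuous fun p : ℝ × ℝ => ∫ r in 0..p.2, κ ⬝ᵥ β p.1 r :=
    intervalIntegral.continuous_parametric_intervalIntegral_of_continuous
      (f := fun p r => κ ⬝ᵥ β p.1 r) (by fun_prop) continuous_snd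
  refine continuous_const.add (continuous_pi fun i => continuous_pi fun j => ?_)
  exact intervalIntegral.continuous_parametric_intervalIntegral_of_continuous'
    (by fun_prop) 0 T

theorem rankOneFlow_const (a : ℂ) (v κ : m → ℂ) :
    rankOneFlow a (fun _ => v) κ 1 = NormedSpace.exp (a • vecMulVec v κ) := by
  -- any Banach-algebra norm on matrices serves to differentiate `exp`
  let _ : NormedRing (Matrix m m ℂ) := Matrix.linftyOpNormedRing
  let _ : NormedAlgebra ℝ (Matrix m m ℂ) := Matrix.linftyOpNormedAlgebra
  have hexp : ∀ t : ℝ, ∀ i j, HasDerivAt (fun s : ℝ => NormedSpace.exp (s • a • vecMulVec v κ) i j)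
      ((a • vecMulVec v κ * NormedSpace.exp (t • a • vecMulVec v κ)) i j) t := fun t i j =>
    ((entryLinearMap ℝ ℂ i j).toContinuousLinearMap.hasFDerivAt).comp_hasDerivAt t
      (hasDerivAt_exp_smul_const' _ t)
  simpa using (eq_rankOneFlow_of_hasDerivAt continuous_const zero_le_one
    (by simp [NormedSpace.exp_zero]) fun t _ => hexp t).symm

theorem eq_rankOneFlow_comp_mul_of_hasDerivAt {μ : ℂ} {β : ℝ → m → ℂ} {κ : m → ℂ} {δ : ℝ}
    {Z : ℝ → Matrix m m ℂ} (hβ : Continuous β) (hδ : 0 < δ) (hZ0 : Z 0 = 1)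
    (hZ : ∀ t ∈ Icc 0 δ, ∀ i j,
      HasDerivAt (fun s => Z s i j) (((-(μ / δ) • vecMulVec (β t) κ) * Z t) i j) t) :
    Z δ = rankOneFlow (-μ) (fun s => β (δ * s)) κ 1 := by
  have hrescaled : ∀ s ∈ Icc (0 : ℝ) 1, ∀ i j, HasDerivAt (fun r => Z (δ * r) i j)
      (((-μ • vecMulVec (β (δ * s)) κ) * Z (δ * s)) i j) s := by
    intro s hs i j
    have hδs : δ * s ∈ Icc 0 δ := ⟨mul_nonneg hδ.le hs.1, mul_le_of_le_one_right hδ.le hs.2⟩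
    refine ((hZ _ hδs i j).scomp s ((hasDerivAt_id s).const_mul δ)).congr_deriv ?_
    have hδ' : (δ : ℂ) ≠ 0 := Complex.ofReal_ne_zero.2 hδ.ne'
    rw [smul_vecMulVec_mul_apply, smul_vecMulVec_mul_apply, mul_one, Complex.real_smul]
    field_simp
  simpa using eq_rankOneFlow_of_hasDerivAt (Z := fun r => Z (δ * r)) (by fun_prop) zero_le_one
    (by simpa using hZ0) hrescaled

end RankOne

theorem stmt_17_general (n : ℕ)
    (b : ℝ → Fin n → ℝ) (hbc : Continuous b)
    (K0 : Fin n → ℝ) (μ : ℂ)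
    (Zd : ℝ → ℝ → Matrix (Fin n) (Fin n) ℂ)
    (hZd0 : ∀ δ > (0 : ℝ), Zd δ 0 = 1)
    (hZdode : ∀ δ > (0 : ℝ), ∀ t ∈ Icc (0 : ℝ) δ, ∀ i j,
      HasDerivAt (fun s => Zd δ s i j)
        (((-(μ / (δ : ℂ)) •
            Matrix.vecMulVec (fun i => ((b t i : ℝ) : ℂ)) (fun j => ((K0 j : ℝ) : ℂ)))
          * Zd δ t) i j) t) :
    Tendsto (fun δ => Zd δ δ) (nhdsWithin 0 (Ioi (0 : ℝ)))
      (nhds (NormedSpace.exp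
        (-μ • Matrix.vecMulVec (fun i => ((b 0 i : ℝ) : ℂ)) (fun j => ((K0 j : ℝ) : ℂ))))) := by
  set β : ℝ → Fin n → ℂ := fun t i => b t i
  set κ : Fin n → ℂ := fun j => K0 j
  have hβ : Continuous β := by fun_prop
  have hflow : Continuous fun δ => rankOneFlow (-μ) (fun s => β (δ * s)) κ 1 :=
    continuous_rankOneFlow (-μ) (β := fun δ s => β (δ * s)) (by fun_prop) κ 1
  have hlim : rankOneFlow (-μ) (fun s => β (0 * s)) κ 1 =
      NormedSpace.exp (-μ • vecMulVec (β 0) κ) := by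
    simpa using rankOneFlow_const (-μ) (β 0) κ
  rw [← hlim]
  refine ((hflow.tendsto 0).mono_left nhdsWithin_le_nhds).congr' ?_
  filter_upwards [self_mem_nhdsWithin] with δ hδ
  exact (eq_rankOneFlow_comp_mul_of_hasDerivAt hβ hδ (hZd0 δ hδ) (hZdode δ hδ)).symm

/-- **Core impulse-limit computation (behind eq. (3.8)).**
If `Z_δ` solves `Z' = −(μ/δ) b(t)K₀ᵀ Z`, `Z_δ(0) = I`, on `[0, δ]`, then
`Z_δ(δ) → exp(−μ b(0)K₀ᵀ)` as `δ → 0⁺`. -/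
theorem stmt_17 (n : ℕ) (hn : 1 ≤ n)
    (b : ℝ → Fin n → ℝ) (hbc : Continuous b)
    (K0 : Fin n → ℝ) (μ : ℂ)
    (Zd : ℝ → ℝ → Matrix (Fin n) (Fin n) ℂ)
    (hZd0 : ∀ δ > (0 : ℝ), Zd δ 0 = 1)
    (hZdode : ∀ δ > (0 : ℝ), ∀ t ∈ Icc (0 : ℝ) δ, ∀ i j,
      HasDerivAt (fun s => Zd δ s i j)
        (((-(μ / (δ : ℂ)) •
            Matrix.vecMulVec (fun i => ((b t i : ℝ) : ℂ)) (fun j => ((K0 j : ℝ) : ℂ)))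
          * Zd δ t) i j) t) :
    Tendsto (fun δ => Zd δ δ) (nhdsWithin 0 (Ioi (0 : ℝ)))
      (nhds (NormedSpace.exp
        (-μ • Matrix.vecMulVec (fun i => ((b 0 i : ℝ) : ℂ)) (fun j => ((K0 j : ℝ) : ℂ))))) :=
  stmt_17_general n b hbc K0 μ Zd hZd0 hZdode
end
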